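/- arXiv:1511.01411 — 13 statements merged into one kernel-verified Lean document; each statement's English description precedes it below -/
import Mathlib

section
/- Let A and Θ be types, u : A → Θ → ℝ, θ : ℕ → Θ a sequence of parameters, and T a natural number. Suppose L : ℕ → A is a 'leader' selection satisfying: for every t with 1 ≤ t ≤ T and every a ∈ A, ∑_{τ=1}^{t} u(L(t), θ(τ)) ≥ ∑_{τ=1}^{t} u(a, θ(τ)). Then for every a* ∈ A, ∑_{t=1}^{T} u(L(t), θ(t)) ≥ ∑_{t=1}^{T} u(a*, θ(t)). -/
/-! Induct on the horizon `T`. Over the first `T + 1` rounds the leader `L (T + 1)` beats any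
fixed action; over the first `T` rounds the earlier leaders beat `L (T + 1)` by induction, and on
round `T + 1` both play `L (T + 1)`. -/

open Finset

/-- `g t a` is the reward of action `a` in round `t`; rounds are numbered from `1`. -/
def IsLeader {A M : Type*} [AddCommMonoid M] [LE M] (g : ℕ → A → M) (L : ℕ → A) (T : ℕ) : Prop :=
  ∀ t, 1 ≤ t → t ≤ T → ∀ a, ∑ τ ∈ Icc 1 t, g τ a ≤ ∑ τ ∈ Icc 1 t, g τ (L t)

theorem sum_Icc_le_sum_Icc_of_isLeader {A M : Type*} [AddCommMonoid M] [PartialOrder M]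
    [IsOrderedAddMonoid M] {g : ℕ → A → M} {L : ℕ → A} {T : ℕ} (hL : IsLeader g L T) (a : A) :
    ∑ t ∈ Icc 1 T, g t a ≤ ∑ t ∈ Icc 1 T, g t (L t) := by
  induction T generalizing a with
  | zero => simp
  | succ T ih =>
    have hT : 1 ≤ T + 1 := Nat.le_add_left 1 T
    have past : ∑ t ∈ Icc 1 T, g t (L (T + 1)) ≤ ∑ t ∈ Icc 1 T, g t (L t) :=
      ih (fun t h1 h2 => hL t h1 (h2.trans T.le_succ)) _
    calc ∑ t ∈ Icc 1 (T + 1), g t a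
        ≤ ∑ t ∈ Icc 1 (T + 1), g t (L (T + 1)) := hL (T + 1) hT le_rfl a
      _ = ∑ t ∈ Icc 1 T, g t (L (T + 1)) + g (T + 1) (L (T + 1)) := sum_Icc_succ_top hT _
      _ ≤ ∑ t ∈ Icc 1 T, g t (L t) + g (T + 1) (L (T + 1)) := add_le_add_left past _
      _ = ∑ t ∈ Icc 1 (T + 1), g t (L t) := (sum_Icc_succ_top hT _).symm

/-- **Be-the-leader lemma.** If `L t` maximizes the cumulative utility of the first `t`
parameters (including the current one), then `L` has no regret against any fixed action. -/
theorem be_the_leader {A Θ : Type*} (u : A → Θ → ℝ) (θ : ℕ → Θ) (T : ℕ) (L : ℕ → A)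
    (hL : ∀ t, 1 ≤ t → t ≤ T → ∀ a : A,
      ∑ τ ∈ Finset.Icc 1 t, u (L t) (θ τ) ≥ ∑ τ ∈ Finset.Icc 1 t, u a (θ τ)) :
    ∀ a : A, ∑ t ∈ Finset.Icc 1 T, u (L t) (θ t) ≥ ∑ t ∈ Finset.Icc 1 T, u a (θ t) :=
  sum_Icc_le_sum_Icc_of_isLeader (g := fun t a => u a (θ t)) hL
end

section
/- Let A and Θ be types, u : A → Θ → ℝ, and f₋, f₊ : Θ → ℝ with −f₋(θ') ≤ u(a, θ') ≤ f₊(θ') for all a ∈ A and θ' ∈ Θ. Let θ : ℕ → Θ be a sequence, T and k natural numbers, and x : Fin k → Θ a fixed 'perturbation' sequence. Suppose L : ℕ → A satisfies: for every t with 1 ≤ t ≤ T and every a ∈ A, ∑_{τ=1}^{k} u(L(t), x(τ)) + ∑_{s=1}^{t} u(L(t), θ(s)) ≥ ∑_{τ=1}^{k} u(a, x(τ)) + ∑_{s=1}^{t} u(a, θ(s)). Then for every a* ∈ A, ∑_{t=1}^{T} (u(a*, θ(t)) − u(L(t), θ(t))) ≤ ∑_{τ=1}^{k} (f₊(x(τ))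 + f₋(x(τ))). -/
/-!
Telescoping over `t`: since `L t` maximises the cumulative payoff up to `t`, replacing `L t` by
`L (t + 1)` in the cumulative payoff up to `t` can only lose, so playing `L t` at every step earns
at least the cumulative payoff of the final leader `L T`, up to the perturbation term of `L 1`.
That leader beats every fixed action, so the regret is at most the difference of the
perturbation terms of two actions, which the payoff bounds control sample by sample.
-/

open Finset

section BeTheLeader

variable {A : Type*} (P : A → ℝ) (g : ℕ → A → ℝ)

def cumulativePayoff (t : ℕ) (a : A) : ℝ :=
  P a + ∑ s ∈ Icc 1 t, g s a

variable {P g} {L : ℕ → A} {T : ℕ}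

theorem cumulativePayoff_leader_le_sum
    (hL : ∀ t, 1 ≤ t → t ≤ T → ∀ a, cumulativePayoff P g t a ≤ cumulativePayoff P g t (L t))
    (hT : 1 ≤ T) :
    cumulativePayoff P g T (L T) ≤ P (L 1) + ∑ s ∈ Icc 1 T, g s (L s) := by
  induction T, hT using Nat.le_induction with
  | base => simp [cumulativePayoff]
  | succ n hn ih =>
    have hleader := hL n hn (Nat.le_succ n) (L (n + 1))
    have hprev := ih fun t ht htn => hL t ht (htn.trans (Nat.le_succ n))
    simp only [cumulativePayoff, sum_Icc_succ_top (Nat.le_succ_of_le hn)] at *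
    linarith

theorem sum_sub_leader_le
    (hL : ∀ t, 1 ≤ t → t ≤ T → ∀ a, cumulativePayoff P g t a ≤ cumulativePayoff P g t (L t))
    (hT : 1 ≤ T) (a : A) :
    ∑ t ∈ Icc 1 T, (g t a - g t (L t)) ≤ P (L 1) - P a := by
  have hbest := hL T hT le_rfl a
  have hchain := cumulativePayoff_leader_le_sum hL hT
  rw [sum_sub_distrib]
  simp only [cumulativePayoff] at hbest hchain
  linarith

end BeTheLeader

theorem sum_sub_sum_le_sum_range {A Θ ι : Type*} {u : A → Θ → ℝ} {fm fp : Θ → ℝ}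
    (hbound : ∀ (a : A) (θ' : Θ), -fm θ' ≤ u a θ' ∧ u a θ' ≤ fp θ')
    (s : Finset ι) (x : ι → Θ) (a b : A) :
    ∑ i ∈ s, u b (x i) - ∑ i ∈ s, u a (x i) ≤ ∑ i ∈ s, (fp (x i) + fm (x i)) := by
  rw [← sum_sub_distrib]
  refine sum_le_sum fun i _ => ?_
  linarith [(hbound b (x i)).2, (hbound a (x i)).1]

/-- **Be-the-leader with fixed sample perturbations.** If `L t` maximizes cumulative utility
over the augmented sequence consisting of fixed perturbation samples `x 1, …, x k` followed by
the true parameters `θ 1, …, θ t`, then the regret of playing `L t` at step `t` against any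
fixed action is bounded by the total payoff range of the perturbation samples. -/
theorem be_the_perturbed_leader {A Θ : Type*} (u : A → Θ → ℝ) (fm fp : Θ → ℝ)
    (hbound : ∀ (a : A) (θ' : Θ), -fm θ' ≤ u a θ' ∧ u a θ' ≤ fp θ')
    (θ : ℕ → Θ) (T k : ℕ) (x : Fin k → Θ) (L : ℕ → A)
    (hL : ∀ t, 1 ≤ t → t ≤ T → ∀ a : A,
      ∑ τ : Fin k, u (L t) (x τ) + ∑ s ∈ Finset.Icc 1 t, u (L t) (θ s) ≥
        ∑ τ : Fin k, u a (x τ) + ∑ s ∈ Finset.Icc 1 t, u a (θ s)) :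
    ∀ a : A, ∑ t ∈ Finset.Icc 1 T, (u a (θ t) - u (L t) (θ t)) ≤
      ∑ τ : Fin k, (fp (x τ) + fm (x τ)) := by
  intro a
  have hrange := sum_sub_sum_le_sum_range hbound univ x a
  rcases Nat.eq_zero_or_pos T with rfl | hT
  · simpa using hrange a
  · calc ∑ t ∈ Icc 1 T, (u a (θ t) - u (L t) (θ t))
        ≤ ∑ τ : Fin k, u (L 1) (x τ) - ∑ τ : Fin k, u a (x τ) :=
          sum_sub_leader_le (P := fun b => ∑ τ : Fin k, u b (x τ))
            (g := fun s b => u b (θ s)) hL hT a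
      _ ≤ ∑ τ : Fin k, (fp (x τ) + fm (x τ)) := hrange (L 1)
end

section
/- Let A and Θ be types, u : A → Θ → ℝ, f₋, f₊ : Θ → ℝ with −f₋(θ') ≤ u(a, θ') ≤ f₊(θ') for all a, θ'. Let θ : ℕ → Θ be a fixed sequence, T ≥ 1, (Ω, 𝓕, μ) a probability space, ξ : Ω → List Θ a random perturbation sequence, and P : Ω → ℕ → A a map such that for μ-almost every ω and every t with 0 ≤ t ≤ T, P(ω, t) maximizes a ↦ ∑_{x ∈ ξ(ω)} u(a, x) + ∑_{s=1}^{t} u(a, θ(s)) over A. Assume each function ω ↦ u(P(ω, t), θ(s)) (for 0 ≤ t ≤ T, 1 ≤ s ≤ T) and ω ↦ ∑_{x ∈ ξ(ω)} (f₋(x) + f₊(x)) is integrable with respect to μ. Suppose moreover the stability property: for every t with 1 ≤ t ≤ T, ∫_Ω (u(P(ω, t), θ(t)) − u(P(ω, t−1), θ(t))) dμ(ω) ≤ g(t). Then for every a* ∈ A, ∫_Ω ∑_{t=1}^{T} (u(a*, θ(t)) − u(P(ω, t−1), θ(t))) dμ(ω) ≤ ∑_{t=1}^{T} g(t) + ∫_Ω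 ∑_{x ∈ ξ(ω)} (f₋(x) + f₊(x)) dμ(ω). -/
/-!
Fix `ω` and let `F b = ∑_{x ∈ ξ ω} u b x` be the payoff of the fake history. By induction on
the horizon, the leader sequence `p t = P ω t`, which already knows round `t`, beats every
fixed action `b` up to `F (p 0) - F b`, and the payoff bounds make this at most
`∑_{x ∈ ξ ω} (f₋ x + f₊ x)`. The learner plays `p (t - 1)` instead of `p t`; the price of
that delay in round `t` is exactly the stability term.
-/

open MeasureTheory Finset

section BeTheLeader

variable {A : Type*} (F : A → ℝ) (ℓ : ℕ → A → ℝ) (p : ℕ → A) (T : ℕ)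

def IsPerturbedLeader : Prop :=
  ∀ t ≤ T, ∀ b, F b + ∑ s ∈ Icc 1 t, ℓ s b ≤ F (p t) + ∑ s ∈ Icc 1 t, ℓ s (p t)

variable {F ℓ p T}

theorem IsPerturbedLeader.le_add_sum_leader (hp : IsPerturbedLeader F ℓ p T) (t : ℕ) :
    t ≤ T → ∀ b,
      F b + ∑ s ∈ Icc 1 t, ℓ s b ≤ F (p 0) + ∑ s ∈ Icc 1 t, ℓ s (p s) := by
  induction t with
  | zero => simpa using hp 0 (Nat.zero_le T)
  | succ n ih =>
    intro hn b
    have h_leader := hp (n + 1) hn b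
    have h_prev := ih (Nat.le_of_succ_le hn) (p (n + 1))
    simp only [sum_Icc_succ_top (Nat.succ_le_succ (Nat.zero_le n))] at h_leader ⊢
    linarith

theorem IsPerturbedLeader.sum_sub_le (hp : IsPerturbedLeader F ℓ p T) (b : A) :
    ∑ t ∈ Icc 1 T, (ℓ t b - ℓ t (p t)) ≤ F (p 0) - F b := by
  have := hp.le_add_sum_leader T le_rfl b
  rw [sum_sub_distrib]
  linarith

end BeTheLeader

theorem List.sum_map_sub_sum_map_le {Θ : Type*} {f g h : Θ → ℝ} (l : List Θ)
    (hfg : ∀ x, f x - g x ≤ h x) :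
    (l.map f).sum - (l.map g).sum ≤ (l.map h).sum := by
  induction l with
  | nil => simp
  | cons x xs ih =>
    simp only [List.map_cons, List.sum_cons]
    linarith [hfg x]

theorem ftpl_general_regret_general {A Θ : Type*} {Ω : Type*} [MeasurableSpace Ω]
    (μ : Measure Ω) [IsProbabilityMeasure μ]
    (u : A → Θ → ℝ) (fm fp : Θ → ℝ)
    (hbound : ∀ (a : A) (θ' : Θ), -fm θ' ≤ u a θ' ∧ u a θ' ≤ fp θ')
    (θ : ℕ → Θ) (T : ℕ)
    (ξ : Ω → List Θ) (P : Ω → ℕ → A) (g : ℕ → ℝ)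
    (hopt : ∀ᵐ ω ∂μ, ∀ t ≤ T, ∀ a : A,
      ((ξ ω).map (fun x => u (P ω t) x)).sum + ∑ s ∈ Finset.Icc 1 t, u (P ω t) (θ s) ≥
        ((ξ ω).map (fun x => u a x)).sum + ∑ s ∈ Finset.Icc 1 t, u a (θ s))
    (hint : ∀ t ≤ T, ∀ s, 1 ≤ s → s ≤ T →
      Integrable (fun ω => u (P ω t) (θ s)) μ)
    (hint' : Integrable (fun ω => ((ξ ω).map (fun x => fm x + fp x)).sum) μ)
    (hstab : ∀ t, 1 ≤ t → t ≤ T →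
      ∫ ω, (u (P ω t) (θ t) - u (P ω (t - 1)) (θ t)) ∂μ ≤ g t) :
    ∀ a : A,
      ∫ ω, (∑ t ∈ Finset.Icc 1 T, (u a (θ t) - u (P ω (t - 1)) (θ t))) ∂μ ≤
        ∑ t ∈ Finset.Icc 1 T, g t +
          ∫ ω, ((ξ ω).map (fun x => fm x + fp x)).sum ∂μ := by
  intro a
  have h_btl : ∀ᵐ ω ∂μ, ∑ t ∈ Icc 1 T, (u a (θ t) - u (P ω t) (θ t)) ≤
      ((ξ ω).map (fun x => fm x + fp x)).sum := by
    filter_upwards [hopt] with ω hω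
    have h_leader : IsPerturbedLeader (fun b => ((ξ ω).map (u b)).sum) (fun s b => u b (θ s))
        (P ω) T := hω
    refine (h_leader.sum_sub_le a).trans <| (ξ ω).sum_map_sub_sum_map_le fun x => ?_
    linarith [(hbound (P ω 0) x).2, (hbound a x).1]
  have h_int : ∀ t ∈ Icc 1 T, ∀ t' ≤ T, Integrable (fun ω => u (P ω t') (θ t)) μ :=
    fun t ht t' ht' => hint t' ht' t (mem_Icc.1 ht).1 (mem_Icc.1 ht).2
  have h_int_btl : Integrable (fun ω => ∑ t ∈ Icc 1 T, (u a (θ t) - u (P ω t) (θ t))) μ :=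
    integrable_finsetSum _ fun t ht => (integrable_const _).sub (h_int t ht t (mem_Icc.1 ht).2)
  have h_int_stab : ∀ t ∈ Icc 1 T,
      Integrable (fun ω => u (P ω t) (θ t) - u (P ω (t - 1)) (θ t)) μ := fun t ht =>
    (h_int t ht t (mem_Icc.1 ht).2).sub (h_int t ht (t - 1) (by grind))
  calc ∫ ω, ∑ t ∈ Icc 1 T, (u a (θ t) - u (P ω (t - 1)) (θ t)) ∂μ
      = ∫ ω, ∑ t ∈ Icc 1 T, (u a (θ t) - u (P ω t) (θ t)) ∂μ
          + ∑ t ∈ Icc 1 T, ∫ ω, (u (P ω t) (θ t) - u (P ω (t - 1)) (θ t)) ∂μ := by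
        rw [← integral_finsetSum _ h_int_stab, ← integral_add h_int_btl
          (integrable_finsetSum _ h_int_stab)]
        simp only [← sum_add_distrib, sub_add_sub_cancel]
    _ ≤ ∫ ω, ((ξ ω).map (fun x => fm x + fp x)).sum ∂μ + ∑ t ∈ Icc 1 T, g t :=
        add_le_add (integral_mono_ae h_int_btl hint' h_btl)
          (sum_le_sum fun t ht => hstab t (mem_Icc.1 ht).1 (mem_Icc.1 ht).2)
    _ = _ := add_comm _ _

/-- **General regret bound for Follow-The-Perturbed-Leader with sample perturbations.**
The learner augments the history with a random fake history `ξ ω` drawn once, and at step `t`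
plays the optimizer `P ω (t-1)` of cumulative utility on the augmented history. Under the
stability property, its expected regret against an oblivious adversary is bounded by the
cumulative stability plus the expected total payoff range of the fake samples. -/
theorem ftpl_general_regret {A Θ : Type*} {Ω : Type*} [MeasurableSpace Ω]
    (μ : Measure Ω) [IsProbabilityMeasure μ]
    (u : A → Θ → ℝ) (fm fp : Θ → ℝ)
    (hbound : ∀ (a : A) (θ' : Θ), -fm θ' ≤ u a θ' ∧ u a θ' ≤ fp θ')
    (θ : ℕ → Θ) (T : ℕ) (hT : 1 ≤ T)
    (ξ : Ω → List Θ) (P : Ω → ℕ → A) (g : ℕ → ℝ)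
    (hopt : ∀ᵐ ω ∂μ, ∀ t ≤ T, ∀ a : A,
      ((ξ ω).map (fun x => u (P ω t) x)).sum + ∑ s ∈ Finset.Icc 1 t, u (P ω t) (θ s) ≥
        ((ξ ω).map (fun x => u a x)).sum + ∑ s ∈ Finset.Icc 1 t, u a (θ s))
    (hint : ∀ t ≤ T, ∀ s, 1 ≤ s → s ≤ T →
      Integrable (fun ω => u (P ω t) (θ s)) μ)
    (hint' : Integrable (fun ω => ((ξ ω).map (fun x => fm x + fp x)).sum) μ)
    (hstab : ∀ t, 1 ≤ t → t ≤ T →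
      ∫ ω, (u (P ω t) (θ t) - u (P ω (t - 1)) (θ t)) ∂μ ≤ g t) :
    ∀ a : A,
      ∫ ω, (∑ t ∈ Finset.Icc 1 T, (u a (θ t) - u (P ω (t - 1)) (θ t))) ∂μ ≤
        ∑ t ∈ Finset.Icc 1 T, g t +
          ∫ ω, ((ξ ω).map (fun x => fm x + fp x)).sum ∂μ :=
  ftpl_general_regret_general μ u fm fp hbound θ T ξ P g hopt hint hint' hstab
end

section
/- Let m be a natural number, v : Finset (Fin m) → ℝ, S : Finset (Fin m), and a, θ : Fin m → ℝ. Assume ∑_{j ∈ S} a(j) = v(S) and that for every X ⊆ S, v(X) ≥ ∑_{j ∈ X} a(j). Let X₀ = {j ∈ S : a(j) > θ(j)}. Then v(X₀) − ∑_{j ∈ X₀} θ(j) ≥ v(S) − ∑_{j ∈ S} θ(j). -/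
namespace Finset

variable {ι G : Type*} [AddCommGroup G] [LinearOrder G] [IsOrderedAddMonoid G]

theorem sum_sub_le_sum_filter_lt_sub (s : Finset ι) (a θ : ι → G)
    [DecidablePred fun j => θ j < a j] :
    ∑ j ∈ s, (a j - θ j) ≤ ∑ j ∈ s.filter (fun j => θ j < a j), (a j - θ j) :=
  sum_le_sum_of_subset_of_nonpos' (filter_subset _ s) fun _ hj hj' =>
    sub_nonpos.2 <| not_lt.1 fun hlt => hj' (mem_filter.2 ⟨hj, hlt⟩)

end Finset

open Finset

/-- **1-value covering of SiSPAs for XOS valuations.** If `a` is an additive supporting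
valuation of the XOS valuation `v` at the set `S`, then bidding `a j` on each item `j ∈ S`
against thresholds `θ` (winning exactly the items with `a j > θ j` and paying their
thresholds) yields utility at least `v S` minus the threshold price of the whole set `S`. -/
theorem xos_value_covering (m : ℕ) (v : Finset (Fin m) → ℝ) (S : Finset (Fin m))
    (a θ : Fin m → ℝ)
    (hsum : ∑ j ∈ S, a j = v S)
    (hdom : ∀ X ⊆ S, v X ≥ ∑ j ∈ X, a j) :
    v (S.filter (fun j => a j > θ j)) - ∑ j ∈ S.filter (fun j => a j > θ j), θ j ≥
      v S - ∑ j ∈ S, θ j := by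
  set won := S.filter (fun j => a j > θ j)
  calc v S - ∑ j ∈ S, θ j = ∑ j ∈ S, (a j - θ j) := by rw [sum_sub_distrib, hsum]
    _ ≤ ∑ j ∈ won, (a j - θ j) := sum_sub_le_sum_filter_lt_sub S a θ
    _ = ∑ j ∈ won, a j - ∑ j ∈ won, θ j := sum_sub_distrib _ _
    _ ≤ v won - ∑ j ∈ won, θ j := by grw [hdom won (filter_subset _ S)]
end

section
/- Let n ≥ 2 and m ≥ 1 be natural numbers. For each i ∈ Fin n let v_i : Finset (Fin m) → ℝ, and let b : Fin n → Fin m → ℝ be nonnegative bids satisfying the no-overbidding condition: for all i and all S ⊆ Fin m, ∑_{j ∈ S} b(i,j) ≤ v_i(S). Let w : Fin m → Fin n satisfy b(w(j), j) ≥ b(i,j) for all i, j, and set X_i = {j : w(j) = i} and θ(i,j) = max_{i' ≠ i} b(i',j). Then for every pairwise disjoint family (S_1,…,S_n) of subsets of Fin m, ∑_{i} ∑_{j ∈ S_i} θ(i,j) ≤ ∑_{i} v_i(X_i). -/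
/-!
A threshold never exceeds the winning bid on its item, and disjointness of the `S i` lets each
item be charged at most once, so the threshold payments are at most the sum of all winning bids.
Grouping the items by winner and applying no-overbidding to each winner's bundle bounds that sum
by the welfare.
-/

/-- The threshold faced by player `i` on item `j`: the highest competing bid
`max_{i' ≠ i} b i' j` (well-defined since there are at least two players). -/
noncomputable def maxRival {n m : ℕ} (hn : 2 ≤ n) (b : Fin n → Fin m → ℝ)
    (i : Fin n) (j : Fin m) : ℝ :=
  (Finset.univ.erase i).sup'
    (by
      haveI : Nontrivial (Fin n) := Fin.nontrivial_iff_two_le.mpr hn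
      obtain ⟨i', hi'⟩ := exists_ne i
      exact ⟨i', Finset.mem_erase.mpr ⟨hi', Finset.mem_univ _⟩⟩)
    (fun i' => b i' j)

open Finset Function

lemma maxRival_le_iff {n m : ℕ} (hn : 2 ≤ n) (b : Fin n → Fin m → ℝ) (i : Fin n)
    (j : Fin m) {c : ℝ} : maxRival hn b i j ≤ c ↔ ∀ i' ≠ i, b i' j ≤ c := by
  simp [maxRival]

section Allocation

variable {ι α M : Type*} [Fintype ι] [Fintype α] [AddCommMonoid M]

lemma sum_apply_eq_sum_fiberwise [DecidableEq ι] (w : α → ι) (b : ι → α → M) :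
    ∑ j, b (w j) j = ∑ i, ∑ j ∈ univ.filter (fun j => w j = i), b i j := by
  rw [← sum_fiberwise univ w fun j => b (w j) j]
  exact sum_congr rfl fun i _ => sum_congr rfl fun j hj => by rw [(mem_filter.mp hj).2]

variable [PartialOrder M] [IsOrderedAddMonoid M]

lemma sum_sum_le_sum_of_pairwise_disjoint {S : ι → Finset α} (hS : Pairwise (Disjoint on S))
    {f : α → M} (hf : ∀ j, 0 ≤ f j) : ∑ i, ∑ j ∈ S i, f j ≤ ∑ j, f j := by
  rw [← sum_disjiUnion univ S (hS.set_pairwise _)]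
  exact sum_le_sum_of_subset_of_nonneg (subset_univ _) fun j _ _ => hf j

lemma sum_winning_bids_le_welfare [DecidableEq ι] {b : ι → α → M} {v : ι → Finset α → M}
    (hnob : ∀ i S, ∑ j ∈ S, b i j ≤ v i S) (w : α → ι) :
    ∑ j, b (w j) j ≤ ∑ i, v i (univ.filter fun j => w j = i) := by
  rw [sum_apply_eq_sum_fiberwise]
  exact sum_le_sum fun i _ => hnob i _

end Allocation

theorem sispa_threshold_covered_general (n m : ℕ) (hn : 2 ≤ n)
    (v : Fin n → Finset (Fin m) → ℝ)
    (b : Fin n → Fin m → ℝ) (hb : ∀ i j, 0 ≤ b i j)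
    (hnob : ∀ (i : Fin n) (S : Finset (Fin m)), ∑ j ∈ S, b i j ≤ v i S)
    (w : Fin m → Fin n) (hw : ∀ (i : Fin n) (j : Fin m), b (w j) j ≥ b i j) :
    ∀ S : Fin n → Finset (Fin m), (∀ i i', i ≠ i' → Disjoint (S i) (S i')) →
      ∑ i : Fin n, ∑ j ∈ S i, maxRival hn b i j ≤
        ∑ i : Fin n, v i (Finset.univ.filter (fun j => w j = i)) := by
  intro S hS
  calc ∑ i, ∑ j ∈ S i, maxRival hn b i j
      ≤ ∑ i, ∑ j ∈ S i, b (w j) j :=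
        sum_le_sum fun i _ => sum_le_sum fun j _ =>
          (maxRival_le_iff hn b i j).2 fun i' _ => hw i' j
    _ ≤ ∑ j, b (w j) j := sum_sum_le_sum_of_pairwise_disjoint hS fun j => hb (w j) j
    _ ≤ _ := sum_winning_bids_le_welfare hnob w

/-- **SiSPAs with no-overbidding bidders are ex-post (0,1)-threshold covered:** for any
feasible (pairwise disjoint) allocation `S`, the sum of the players' threshold payments is at
most the social welfare of the realized allocation, where each item `j` goes to a highest
bidder `w j`. -/
theorem sispa_threshold_covered (n m : ℕ) (hn : 2 ≤ n) (hm : 1 ≤ m)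
    (v : Fin n → Finset (Fin m) → ℝ)
    (b : Fin n → Fin m → ℝ) (hb : ∀ i j, 0 ≤ b i j)
    (hnob : ∀ (i : Fin n) (S : Finset (Fin m)), ∑ j ∈ S, b i j ≤ v i S)
    (w : Fin m → Fin n) (hw : ∀ (i : Fin n) (j : Fin m), b (w j) j ≥ b i j) :
    ∀ S : Fin n → Finset (Fin m), (∀ i i', i ≠ i' → Disjoint (S i) (S i')) →
      ∑ i : Fin n, ∑ j ∈ S i, maxRival hn b i j ≤
        ∑ i : Fin n, v i (Finset.univ.filter (fun j => w j = i)) :=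
  sispa_threshold_covered_general n m hn v b hb hnob w hw
end

section
/- Let m, K be natural numbers, w : Fin K → ℝ with w(v) ≥ 0 for all v, and N : Fin K → Finset (Fin m). Define F(x) = ∑_{v} w(v)·(1 − Real.exp(−∑_{j ∈ N(v)} x(j))) and, for S : Finset (Fin m), the coverage value v(S) = ∑_{v : (N(v) ∩ S).Nonempty} w(v). Then for every S : Finset (Fin m), letting 1_S be the indicator vector (1_S(j) = 1 if j ∈ S, else 0), F(1_S) ≥ (1 − 1/e)·v(S). -/
open Finset Real

lemma Finset.mul_sum_filter_le_sum_mul {ι : Type*} (s : Finset ι) (p : ι → Prop)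
    [DecidablePred p] {w f : ι → ℝ} {c : ℝ} (hw : ∀ i ∈ s, 0 ≤ w i) (hf : ∀ i ∈ s, 0 ≤ f i)
    (hc : ∀ i ∈ s, p i → c ≤ f i) :
    c * ∑ i ∈ s with p i, w i ≤ ∑ i ∈ s, w i * f i := by
  rw [mul_sum]
  calc ∑ i ∈ s with p i, c * w i
      ≤ ∑ i ∈ s with p i, w i * f i := by
        refine sum_le_sum fun i hi => ?_
        obtain ⟨his, hpi⟩ := mem_filter.mp hi
        rw [mul_comm]
        exact mul_le_mul_of_nonneg_left (hc i his hpi) (hw i his)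
    _ ≤ ∑ i ∈ s, w i * f i :=
        sum_le_sum_of_subset_of_nonneg (filter_subset _ _)
          fun i hi _ => mul_nonneg (hw i hi) (hf i hi)

lemma Finset.sum_indicator_eq_card_inter {ι : Type*} [DecidableEq ι] (s t : Finset ι) :
    ∑ j ∈ s, (if j ∈ t then (1 : ℝ) else 0) = #(s ∩ t) := by
  rw [sum_boole, filter_mem_eq_inter]

lemma Real.one_sub_exp_neg_nonneg {x : ℝ} (hx : 0 ≤ x) : 0 ≤ 1 - exp (-x) := by
  have : exp (-x) ≤ 1 := exp_le_one_iff.mpr (neg_nonpos.mpr hx)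
  linarith

lemma Real.one_sub_inv_exp_one_le_one_sub_exp_neg {x : ℝ} (hx : 1 ≤ x) :
    1 - (exp 1)⁻¹ ≤ 1 - exp (-x) := by
  have : exp (-x) ≤ (exp 1)⁻¹ := exp_neg 1 ▸ exp_le_exp.mpr (neg_le_neg hx)
  linarith

/-- **Poisson rounding is a (1 − 1/e)-approximate convex rounding scheme at integral points.**
For a coverage valuation with nonnegative vertex weights `w` and incidence sets `N v`, and
`F x = ∑ v, w v · (1 − exp(−∑_{j ∈ N v} x j))`, at the indicator vector of any set `S` we have
`F(1_S) ≥ (1 − 1/e) · v(S)`, where `v(S)` is the total weight of vertices covered by `S`. -/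
theorem poisson_rounding_approx (m K : ℕ) (w : Fin K → ℝ) (hw : ∀ v, 0 ≤ w v)
    (N : Fin K → Finset (Fin m)) (S : Finset (Fin m)) :
    ∑ v : Fin K, w v * (1 - Real.exp (-∑ j ∈ N v, (if j ∈ S then (1 : ℝ) else 0)))
      ≥ (1 - (Real.exp 1)⁻¹) *
          ∑ v ∈ Finset.univ.filter (fun v : Fin K => ((N v) ∩ S).Nonempty), w v := by
  simp_rw [sum_indicator_eq_card_inter]
  refine mul_sum_filter_le_sum_mul _ _ (fun v _ => hw v)
    (fun v _ => one_sub_exp_neg_nonneg (Nat.cast_nonneg _)) fun v _ hv => ?_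
  exact one_sub_inv_exp_one_le_one_sub_exp_neg (Nat.one_le_cast.mpr hv.card_pos)
end

section
/- Let m, K be natural numbers with m ≥ 1, w : Fin K → ℝ with w(v) ≥ 0 for all v, and N : Fin K → Finset (Fin m). Define F(x) = ∑_{v} w(v)·(1 − Real.exp(−∑_{j ∈ N(v)} x(j))), and W = max_{j ∈ Fin m} ∑_{v : j ∈ N(v)} w(v). Then for all x, y : Fin m → ℝ with x(j) ≥ 0 and y(j) ≥ 0 for all j, |F(x) − F(y)| ≤ √m · W · √(∑_{j} (x(j) − y(j))²). -/
/-!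
Every vertex term `w v · (1 - exp (-∑_{j ∈ N v} x j))` is `w v`-Lipschitz in the ℓ¹ distance of
the coordinates in `N v`, because `t ↦ exp (-t)` is 1-Lipschitz on `[0, ∞)`. Summing over vertices
and exchanging the order of summation charges each coordinate `j` with the value
`∑_{v : j ∈ N v} w v ≤ W` of the single item `j`, so `F` is `W`-Lipschitz in ℓ¹; Cauchy–Schwarz
`‖·‖₁ ≤ √m ‖·‖₂` finishes.
-/

open Finset Real

lemma abs_exp_neg_sub_exp_neg_le {a b : ℝ} (ha : 0 ≤ a) (hb : 0 ≤ b) :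
    |exp (-a) - exp (-b)| ≤ |a - b| := by
  wlog hab : a ≤ b generalizing a b
  · rw [abs_sub_comm, abs_sub_comm a]
    exact this hb ha (le_of_not_ge hab)
  have factor : exp (-a) - exp (-b) = exp (-a) * (1 - exp (a - b)) := by
    rw [mul_sub, mul_one, ← exp_add]
    ring_nf
  rw [abs_of_nonneg (sub_nonneg.2 (exp_le_exp.2 (neg_le_neg hab))),
    abs_of_nonpos (sub_nonpos.2 hab), factor]
  calc exp (-a) * (1 - exp (a - b)) ≤ 1 * (1 - exp (a - b)) := by
        gcongr
        · exact sub_nonneg.2 (exp_le_one_iff.2 (sub_nonpos.2 hab))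
        · exact exp_le_one_iff.2 (neg_nonpos.2 ha)
    _ ≤ -(a - b) := by linarith [add_one_le_exp (a - b)]

lemma sum_abs_le_sqrt_card_mul_sqrt_sum_sq {α : Type*} (s : Finset α) (f : α → ℝ) :
    ∑ i ∈ s, |f i| ≤ √(#s : ℝ) * √(∑ i ∈ s, f i ^ 2) := by
  rw [← sqrt_mul (Nat.cast_nonneg _), le_sqrt (sum_nonneg fun i _ ↦ abs_nonneg (f i))]
  · simpa only [sq_abs] using sq_sum_le_card_mul_sum_sq (s := s) (f := fun i ↦ |f i|)
  · positivity

section Coverage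

variable {ι κ : Type*} [Fintype ι] (w : ι → ℝ) (N : ι → Finset κ)

/-- Vertex `v` is covered with probability `1 - exp (-∑_{j ∈ N v} x j)` when each item `j` is
drawn Poisson(`x j`) times independently. -/
noncomputable def coverageSurrogate (x : κ → ℝ) : ℝ :=
  ∑ v, w v * (1 - exp (-∑ j ∈ N v, x j))

variable {w}

lemma abs_coverageSurrogate_sub_le (hw : ∀ v, 0 ≤ w v) {x y : κ → ℝ}
    (hx : ∀ j, 0 ≤ x j) (hy : ∀ j, 0 ≤ y j) :
    |coverageSurrogate w N x - coverageSurrogate w N y|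
      ≤ ∑ v, w v * ∑ j ∈ N v, |x j - y j| := by
  rw [coverageSurrogate, coverageSurrogate, ← sum_sub_distrib]
  refine (abs_sum_le_sum_abs _ _).trans (sum_le_sum fun v _ ↦ ?_)
  rw [← mul_sub, abs_mul, abs_of_nonneg (hw v)]
  refine mul_le_mul_of_nonneg_left ?_ (hw v)
  calc |1 - exp (-∑ j ∈ N v, x j) - (1 - exp (-∑ j ∈ N v, y j))|
      = |exp (-∑ j ∈ N v, y j) - exp (-∑ j ∈ N v, x j)| := by ring_nf
    _ ≤ |∑ j ∈ N v, y j - ∑ j ∈ N v, x j| :=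
        abs_exp_neg_sub_exp_neg_le (sum_nonneg fun j _ ↦ hy j) (sum_nonneg fun j _ ↦ hx j)
    _ = |∑ j ∈ N v, (x j - y j)| := by rw [sum_sub_distrib, abs_sub_comm]
    _ ≤ ∑ j ∈ N v, |x j - y j| := abs_sum_le_sum_abs _ _

variable (w) [Fintype κ] [DecidableEq κ]

lemma sum_mul_sum_eq_sum_itemValue_mul (d : κ → ℝ) :
    ∑ v, w v * ∑ j ∈ N v, d j = ∑ j, (∑ v with j ∈ N v, w v) * d j := by
  simp_rw [mul_sum, sum_mul]
  exact sum_comm' fun v j ↦ by simp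

end Coverage

/-- **Lipschitz/gradient bound for the Poisson rounding surrogate.** For the coverage
surrogate `F x = ∑ v, w v · (1 − exp(−∑_{j ∈ N v} x j))` with nonnegative weights, and
`W = max_j ∑_{v : j ∈ N v} w v` the maximum single-item value, `F` is `√m · W`-Lipschitz in
the Euclidean norm on the nonnegative orthant. -/
theorem poisson_rounding_lipschitz (m K : ℕ) (hm : 1 ≤ m) (w : Fin K → ℝ)
    (hw : ∀ v, 0 ≤ w v) (N : Fin K → Finset (Fin m)) :
    ∀ x y : Fin m → ℝ, (∀ j, 0 ≤ x j) → (∀ j, 0 ≤ y j) →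
      |(∑ v : Fin K, w v * (1 - Real.exp (-∑ j ∈ N v, x j)))
          - ∑ v : Fin K, w v * (1 - Real.exp (-∑ j ∈ N v, y j))|
        ≤ Real.sqrt m *
            (Finset.univ.sup' (Finset.univ_nonempty_iff.mpr ⟨⟨0, hm⟩⟩)
              (fun j : Fin m => ∑ v ∈ Finset.univ.filter (fun v : Fin K => j ∈ N v), w v)) *
            Real.sqrt (∑ j : Fin m, (x j - y j) ^ 2) := by
  intro x y hx hy
  set W := univ.sup' (univ_nonempty_iff.mpr ⟨⟨0, hm⟩⟩)
    fun j : Fin m ↦ ∑ v with j ∈ N v, w v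
  have itemValue_le (j : Fin m) : ∑ v with j ∈ N v, w v ≤ W := 
    le_sup' (fun j : Fin m ↦ ∑ v with j ∈ N v, w v) (mem_univ j)
  have W_nonneg : 0 ≤ W := (sum_nonneg fun v _ ↦ hw v).trans (itemValue_le ⟨0, hm⟩)
  calc |coverageSurrogate w N x - coverageSurrogate w N y|
      ≤ ∑ j, (∑ v with j ∈ N v, w v) * |x j - y j| := by
        rw [← sum_mul_sum_eq_sum_itemValue_mul]
        exact abs_coverageSurrogate_sub_le N hw hx hy
    _ ≤ ∑ j, W * |x j - y j| := by gcongr with j; exact itemValue_le j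
    _ = W * ∑ j, |x j - y j| := (mul_sum _ _ _).symm
    _ ≤ W * (√m * √(∑ j, (x j - y j) ^ 2)) := by
        gcongr
        simpa using sum_abs_le_sqrt_card_mul_sqrt_sum_sq univ fun j ↦ x j - y j
    _ = √m * W * √(∑ j, (x j - y j) ^ 2) := by ring
end

section
/- Let m, T be natural numbers with T ≥ 1, α > 0 and R reals. Let θ : Fin T → Fin m → ℝ with θ(t,j) ≥ 0 for all t, j; let F : (Fin m → ℝ) → ℝ; let x : Fin T → Fin m → ℝ with 0 ≤ x(t,j) ≤ 1; let y : Fin T → Fin m → ℝ with 0 ≤ y(t,j) ≤ x(t,j); and let v : Finset (Fin m) → ℝ. Assume: (regret) for every z : Fin m → ℝ with 0 ≤ z(j) ≤ 1 for all j, (1/T)·∑_{t} [(F(z) − ∑_j θ(t,j)·z(j)) − (F(x(t)) − ∑_j θ(t,j)·x(t,j))] ≤ R; and (approximation) for every S : Finset (Fin m), F(1_S) ≥ v(S)/α, where 1_S is the indicator vector of S. Then for every S : Finset (Fin m), (1/T)·∑_{t} (F(x(t)) − ∑_j θ(t,j)·y(t,j)) ≥ v(S)/α − ∑_{j ∈ S}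 ((1/T)·∑_t θ(t,j)) − R. -/
/-! Testing the regret bound against the integral comparator `1_S` gives
`F(1_S) − avg ⟨θ t, 1_S⟩ − R ≤ avg (F (x t) − ⟨θ t, x t⟩)`. The left side is at least
`v S / α − (average price of S) − R`, and since prices are nonnegative and `y t ≤ x t`, the
buyer pays less under the rounding than at the fractional point, so the right side is at most
the average expected utility. -/

open Finset

lemma indicator_mem_unitCube {ι : Type*} [DecidableEq ι] (S : Finset ι) (j : ι) :
    0 ≤ (if j ∈ S then (1 : ℝ) else 0) ∧ (if j ∈ S then (1 : ℝ) else 0) ≤ 1 := by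
  split_ifs <;> norm_num

lemma sum_mul_indicator {ι : Type*} [Fintype ι] [DecidableEq ι] (S : Finset ι) (p : ι → ℝ) :
    ∑ j, p j * (if j ∈ S then 1 else 0) = ∑ j ∈ S, p j := by
  simp only [mul_ite, mul_one, mul_zero, sum_ite_mem, univ_inter]

lemma average_sub_sub {ι : Type*} [Fintype ι] [Nonempty ι] (c : ℝ) (f g : ι → ℝ) :
    (1 / (Fintype.card ι : ℝ)) * ∑ i, ((c - f i) - g i) =
      c - (1 / (Fintype.card ι : ℝ)) * ∑ i, f i - (1 / (Fintype.card ι : ℝ)) * ∑ i, g i := by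
  have hcard : (Fintype.card ι : ℝ) ≠ 0 := by positivity
  simp only [sum_sub_distrib, sum_const, card_univ, nsmul_eq_mul]
  field_simp

theorem convex_rounding_no_envy_general (m T : ℕ) (hT : 1 ≤ T) (α R : ℝ)
    (θ : Fin T → Fin m → ℝ) (hθ : ∀ t j, 0 ≤ θ t j)
    (F : (Fin m → ℝ) → ℝ)
    (x : Fin T → Fin m → ℝ)
    (y : Fin T → Fin m → ℝ) (hy : ∀ t j, 0 ≤ y t j ∧ y t j ≤ x t j)
    (v : Finset (Fin m) → ℝ)
    (hreg : ∀ z : Fin m → ℝ, (∀ j, 0 ≤ z j ∧ z j ≤ 1) →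
      (1 / (T : ℝ)) * ∑ t : Fin T,
        ((F z - ∑ j : Fin m, θ t j * z j) - (F (x t) - ∑ j : Fin m, θ t j * x t j)) ≤ R)
    (happx : ∀ S : Finset (Fin m), F (fun j => if j ∈ S then 1 else 0) ≥ v S / α) :
    ∀ S : Finset (Fin m),
      (1 / (T : ℝ)) * ∑ t : Fin T, (F (x t) - ∑ j : Fin m, θ t j * y t j)
        ≥ v S / α - ∑ j ∈ S, ((1 / (T : ℝ)) * ∑ t : Fin T, θ t j) - R := by
  intro S
  have : Nonempty (Fin T) := ⟨⟨0, hT⟩⟩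
  have hregret := hreg _ (indicator_mem_unitCube S)
  rw [show (T : ℝ) = Fintype.card (Fin T) by simp, average_sub_sub, Fintype.card_fin] at hregret
  simp only [sum_mul_indicator] at hregret
  have hutility : (1 / (T : ℝ)) * ∑ t, (F (x t) - ∑ j, θ t j * x t j) ≤
      (1 / (T : ℝ)) * ∑ t, (F (x t) - ∑ j, θ t j * y t j) := by
    gcongr with t _ j
    exacts [hθ t j, (hy t j).2]
  rw [← mul_sum, sum_comm]
  linarith [happx S]

/-- **From online convex optimization with a convex rounding scheme to approximate no-envy.**
If `x t` is the iterate of an online algorithm with regret `R` for the payoffs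
`z ↦ F z − ⟨θ t, z⟩` over the cube `[0,1]^m`, the rounding marginals `y t` are dominated
coordinatewise by `x t`, and `F` α-approximates the valuation `v` at integral points, then the
average expected buyer utility is at least `(1/α)·v S` minus the average price of `S`,
minus `R`, for every bundle `S`. -/
theorem convex_rounding_no_envy (m T : ℕ) (hT : 1 ≤ T) (α R : ℝ) (hα : 0 < α)
    (θ : Fin T → Fin m → ℝ) (hθ : ∀ t j, 0 ≤ θ t j)
    (F : (Fin m → ℝ) → ℝ)
    (x : Fin T → Fin m → ℝ) (hx : ∀ t j, 0 ≤ x t j ∧ x t j ≤ 1)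
    (y : Fin T → Fin m → ℝ) (hy : ∀ t j, 0 ≤ y t j ∧ y t j ≤ x t j)
    (v : Finset (Fin m) → ℝ)
    (hreg : ∀ z : Fin m → ℝ, (∀ j, 0 ≤ z j ∧ z j ≤ 1) →
      (1 / (T : ℝ)) * ∑ t : Fin T,
        ((F z - ∑ j : Fin m, θ t j * z j) - (F (x t) - ∑ j : Fin m, θ t j * x t j)) ≤ R)
    (happx : ∀ S : Finset (Fin m), F (fun j => if j ∈ S then 1 else 0) ≥ v S / α) :
    ∀ S : Finset (Fin m),
      (1 / (T : ℝ)) * ∑ t : Fin T, (F (x t) - ∑ j : Fin m, θ t j * y t j)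
        ≥ v S / α - ∑ j ∈ S, ((1 / (T : ℝ)) * ∑ t : Fin T, θ t j) - R :=
  convex_rounding_no_envy_general m T hT α R θ hθ F x y hy v hreg happx
end

section
/- Let d ≥ 1 be a natural number, 0 < p < 1 and H ≥ 0 reals, A a type, u : A → Fin d → ℝ with 0 ≤ u(a, θ) ≤ H for all a, θ, and M : (Fin d → ℕ) → A satisfying: for every frequency vector φ : Fin d → ℕ and every a ∈ A, ∑_{θ ∈ Fin d} φ(θ)·u(M(φ), θ) ≥ ∑_{θ} φ(θ)·u(a, θ). Then for every φ : Fin d → ℕ and every θ* ∈ Fin d, ∑'_{k : Fin d → ℕ} p^d·(1−p)^{∑_θ k(θ)} · u(M(φ + k), θ*) ≥ (1−p) · ∑'_{k : Fin d → ℕ} p^d·(1−p)^{∑_θ k(θ)} · u(M(φ + e_{θ*} + k), θ*), where e_{θ*}(θ) = 1 if θ = θ* and 0 otherwise, and φ + k denotes pointwise addition. -/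
open Function

lemma summable_geom_pi (d : ℕ) {r : ℝ} (h0 : 0 ≤ r) (h1 : r < 1) :
    Summable (fun k : Fin d → ℕ => r ^ (∑ θ : Fin d, k θ)) := by
  induction d with
  | zero =>
    exact (summable_of_finite_support (Set.finite_univ.subset (Set.subset_univ _)))
  | succ n ih =>
    have h := (summable_geometric_of_lt_one h0 h1).mul_of_nonneg ih
      (fun m => pow_nonneg h0 _) (fun k => pow_nonneg h0 _)
    rw [← (Fin.consEquiv fun _ => ℕ).summable_iff]
    refine h.congr fun q => ?_
    obtain ⟨a, k⟩ := q
    simp [Fin.consEquiv, Fin.sum_univ_succ, pow_add]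

/-- **Stability of follow-the-perturbed-leader with geometric sample perturbations.** With a
finite parameter space `Fin d`, an optimization oracle `M` on frequency vectors, and i.i.d.
geometric(p) perturbations `k` (outcome weight `p^d (1−p)^{∑ k θ}`), the expected utility of
follow-the-perturbed-leader on today's parameter `θ*` is at least `(1 − p)` times that of
be-the-perturbed-leader. -/
theorem geometric_perturbation_stability (d : ℕ) (hd : 1 ≤ d) (p H : ℝ)
    (hp : 0 < p) (hp1 : p < 1) (hH : 0 ≤ H)
    {A : Type*} (u : A → Fin d → ℝ) (hu : ∀ a θ, 0 ≤ u a θ ∧ u a θ ≤ H)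
    (M : (Fin d → ℕ) → A)
    (hM : ∀ (φ : Fin d → ℕ) (a : A),
      ∑ θ : Fin d, (φ θ : ℝ) * u (M φ) θ ≥ ∑ θ : Fin d, (φ θ : ℝ) * u a θ) :
    ∀ (φ : Fin d → ℕ) (θstar : Fin d),
      ∑' k : Fin d → ℕ, p ^ d * (1 - p) ^ (∑ θ : Fin d, k θ) * u (M (φ + k)) θstar
        ≥ (1 - p) * ∑' k : Fin d → ℕ, p ^ d * (1 - p) ^ (∑ θ : Fin d, k θ) *
            u (M (φ + (fun θ => if θ = θstar then 1 else 0) + k)) θstar := by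
  intro φ θstar
  have hq0 : (0 : ℝ) ≤ 1 - p := by linarith
  have hq1 : 1 - p < 1 := by linarith
  set e : Fin d → ℕ := fun θ => if θ = θstar then 1 else 0 with he
  set g : (Fin d → ℕ) → ℝ :=
    fun k => p ^ d * (1 - p) ^ (∑ θ : Fin d, k θ) * u (M (φ + k)) θstar with hg
  have hgnonneg : ∀ k, 0 ≤ g k := fun k =>
    mul_nonneg (mul_nonneg (pow_nonneg hp.le _) (pow_nonneg hq0 _)) (hu _ _).1
  have hsum : Summable g := by
    refine Summable.of_nonneg_of_le hgnonneg (fun k => ?_)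
      (((summable_geom_pi d hq0 hq1).mul_left (p ^ d)).mul_right H)
    calc g k ≤ p ^ d * (1 - p) ^ (∑ θ : Fin d, k θ) * H :=
          mul_le_mul_of_nonneg_left (hu _ _).2
            (mul_nonneg (pow_nonneg hp.le _) (pow_nonneg hq0 _))
      _ = p ^ d * (1 - p) ^ (∑ θ : Fin d, k θ) * H := rfl
  have hsum' : Summable (fun k : Fin d → ℕ =>
      p ^ d * (1 - p) ^ (∑ θ : Fin d, k θ) * u (M (φ + e + k)) θstar) := by
    refine Summable.of_nonneg_of_le
      (fun k => mul_nonneg (mul_nonneg (pow_nonneg hp.le _) (pow_nonneg hq0 _)) (hu _ _).1)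
      (fun k => ?_)
      (((summable_geom_pi d hq0 hq1).mul_left (p ^ d)).mul_right H)
    exact mul_le_mul_of_nonneg_left (hu _ _).2
      (mul_nonneg (pow_nonneg hp.le _) (pow_nonneg hq0 _))
  rw [← tsum_mul_left]
  have key : ∀ k : Fin d → ℕ,
      (1 - p) * (p ^ d * (1 - p) ^ (∑ θ : Fin d, k θ) * u (M (φ + e + k)) θstar)
        = g (e + k) := by
    intro k
    have hs : ∑ θ : Fin d, (e + k) θ = 1 + ∑ θ : Fin d, k θ := by
      simp only [Pi.add_apply, Finset.sum_add_distrib]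
      congr 1
      simp [he, Finset.sum_ite_eq']
    have hφ : φ + (e + k) = φ + e + k := (add_assoc φ e k).symm
    simp only [hg, hs, hφ, pow_succ, pow_add, pow_one]
    ring
  calc (∑' k : Fin d → ℕ,
        (1 - p) * (p ^ d * (1 - p) ^ (∑ θ : Fin d, k θ) * u (M (φ + e + k)) θstar))
      = ∑' k : Fin d → ℕ, g (e + k) := by
        exact tsum_congr key
    _ ≤ ∑' k, g k := by
        refine Summable.tsum_le_tsum_of_inj (fun k => e + k)
          (fun a b hab => by simpa using add_left_cancel hab)
          (fun c _ => hgnonneg c) (fun k => le_rfl) ?_ hsum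
        refine (hsum.comp_injective ?_)
        exact fun a b hab => by simpa using add_left_cancel hab
  -- done: `ge` orientation
end

section
/- Let d, T be natural numbers with 1 ≤ d ≤ T, and H ≥ 0 a real. Set p = √(d/T). Let A be a type, u : A → Fin d → ℝ with 0 ≤ u(a, θ) ≤ H for all a, θ, and M : (Fin d → ℕ) → A satisfying: for every φ : Fin d → ℕ and every a ∈ A, ∑_{θ} φ(θ)·u(M(φ), θ) ≥ ∑_{θ} φ(θ)·u(a, θ). Let θ : Fin T → Fin d be any sequence and define φ(t)(θ') = |{s ∈ Fin T : s < t and θ(s) = θ'}|. Then for every a* ∈ A, ∑'_{k : Fin d → ℕ} p^d·(1−p)^{∑_{θ'} k(θ')} · (∑_{t ∈ Fin T} (u(a*, θ(t)) − u(M(φ(t) + k), θ(t)))) ≤ 2·H·√(d·T). -/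
/-!
For a fixed perturbation `k`, the be-the-leader argument bounds the regret of FTPL by the
stability term `∑ₜ (u(M(φₜ₊₁ + k), θₜ) - u(M(φₜ + k), θₜ))` plus `H ∑ k`. The leaders of rounds
`t` and `t + 1` see perturbed counts differing by one unit vector `e`, and the geometric weights
satisfy `w (e + k) = (1 - p) w k`; so the expected utility with the shifted perturbation is
`(1 - p)⁻¹` times a sub-sum of the unshifted one, and each stability term costs at most `p H` in
expectation. The perturbation costs `H 𝔼 ∑ k = H d (1 - p) / p`, and `p = √(d/T)` balances
`T p H` against `H d / p`.
-/

open Finset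

theorem hasSum_pi_prod_of_nonneg {β : Type*} {n : ℕ} {f : Fin n → β → ℝ} {a : Fin n → ℝ}
    (hf0 : ∀ i b, 0 ≤ f i b) (hf : ∀ i, HasSum (f i) (a i)) :
    HasSum (fun k : Fin n → β => ∏ i, f i (k i)) (∏ i, a i) := by
  induction n with
  | zero => simp
  | succ n ih =>
    have ih' := ih (fun i => hf0 i.succ) fun i => hf i.succ
    have hprod0 : ∀ k : Fin n → β, 0 ≤ ∏ i, f i.succ (k i) := fun k =>
      prod_nonneg fun i _ => hf0 _ _
    have hs := (hf 0).summable.mul_of_nonneg ih'.summable (hf0 0) hprod0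
    have hcons : (fun k : Fin (n + 1) → β => ∏ i, f i (k i)) ∘ Fin.consEquiv (fun _ => β) =
        fun x => f 0 x.1 * ∏ i, f i.succ (x.2 i) := by
      ext x
      simp [Fin.prod_univ_succ]
    have hmul := (hf 0).mul ih' hs
    rw [← (Fin.consEquiv fun _ => β).hasSum_iff, hcons, Fin.prod_univ_succ]
    exact hmul

def geomWeight {d : ℕ} (p : ℝ) (k : Fin d → ℕ) : ℝ := p ^ d * (1 - p) ^ ∑ i, k i

section
variable {d : ℕ} {p : ℝ}

theorem geomWeight_eq_prod (p : ℝ) (k : Fin d → ℕ) :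
    geomWeight p k = ∏ i, p * (1 - p) ^ k i := by
  simp [geomWeight, prod_mul_distrib, prod_pow_eq_pow_sum]

theorem geomWeight_nonneg (hp0 : 0 ≤ p) (hp1 : p ≤ 1) (k : Fin d → ℕ) : 0 ≤ geomWeight p k :=
  mul_nonneg (pow_nonneg hp0 _) (pow_nonneg (sub_nonneg.2 hp1) _)

theorem geomWeight_single_add (p : ℝ) (j : Fin d) (k : Fin d → ℕ) :
    geomWeight p (Pi.single j 1 + k) = (1 - p) * geomWeight p k := by
  simp only [geomWeight, Pi.add_apply, sum_add_distrib, sum_pi_single', mem_univ, if_true]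
  ring

theorem hasSum_geometric_pmf (hp0 : 0 < p) (hp1 : p ≤ 1) :
    HasSum (fun m : ℕ => p * (1 - p) ^ m) 1 := by
  simpa [hp0.ne'] using
    (hasSum_geometric_of_lt_one (sub_nonneg.2 hp1) (by linarith)).mul_left p

theorem hasSum_geometric_pmf_mul_coe (hp0 : 0 < p) (hp1 : p ≤ 1) :
    HasSum (fun m : ℕ => p * (1 - p) ^ m * m) ((1 - p) / p) := by
  have hr : ‖1 - p‖ < 1 := by rw [Real.norm_of_nonneg (sub_nonneg.2 hp1)]; linarith
  have := (hasSum_coe_mul_geometric_of_norm_lt_one hr).mul_left p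
  rw [sub_sub_cancel, show p * ((1 - p) / p ^ 2) = (1 - p) / p by field_simp] at this
  have hreorder : (fun m : ℕ => p * (1 - p) ^ m * m) = fun m : ℕ => p * (m * (1 - p) ^ m) := by
    ext; ring
  rwa [hreorder]

theorem hasSum_geomWeight (hp0 : 0 < p) (hp1 : p ≤ 1) : HasSum (geomWeight (d := d) p) 1 := by
  have := hasSum_pi_prod_of_nonneg (n := d) (fun _ m => by positivity [sub_nonneg.2 hp1])
    fun _ => hasSum_geometric_pmf hp0 hp1
  simpa [← geomWeight_eq_prod] using this

theorem hasSum_geomWeight_mul_apply (hp0 : 0 < p) (hp1 : p ≤ 1) (j : Fin d) :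
    HasSum (fun k => geomWeight p k * k j) ((1 - p) / p) := by
  have := hasSum_pi_prod_of_nonneg
    (f := fun i (m : ℕ) => p * (1 - p) ^ m * if i = j then (m : ℝ) else 1)
    (a := fun i => if i = j then (1 - p) / p else 1)
    (fun i m => by have := sub_nonneg.2 hp1; split_ifs <;> positivity) fun i => by
      split_ifs
      · exact hasSum_geometric_pmf_mul_coe hp0 hp1
      · simpa using hasSum_geometric_pmf hp0 hp1
  rw [prod_ite_eq', if_pos (mem_univ j)] at this
  have hprod : (fun k : Fin d → ℕ => ∏ i, p * (1 - p) ^ k i * if i = j then (k i : ℝ) else 1) =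
      fun k => geomWeight p k * k j := by
    ext k
    rw [prod_mul_distrib, prod_ite_eq', if_pos (mem_univ j), geomWeight_eq_prod]
  rwa [hprod] at this

theorem hasSum_geomWeight_mul_sum (hp0 : 0 < p) (hp1 : p ≤ 1) :
    HasSum (fun k : Fin d → ℕ => geomWeight p k * ∑ i, (k i : ℝ)) (d * ((1 - p) / p)) := by
  simpa [mul_sum] using hasSum_sum fun j (_ : j ∈ univ) => hasSum_geomWeight_mul_apply hp0 hp1 j

theorem summable_geomWeight_mul (hp0 : 0 < p) (hp1 : p ≤ 1) {g : (Fin d → ℕ) → ℝ} {C : ℝ}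
    (hg : ∀ k, |g k| ≤ C) : Summable fun k => geomWeight p k * g k :=
  .of_norm_bounded ((hasSum_geomWeight hp0 hp1).summable.mul_right C) fun k => by
    rw [norm_mul, Real.norm_of_nonneg (geomWeight_nonneg hp0.le hp1 k), Real.norm_eq_abs]
    exact mul_le_mul_of_nonneg_left (hg k) (geomWeight_nonneg hp0.le hp1 k)

theorem tsum_geomWeight_mul_single_add_sub_le (hp0 : 0 < p) (hp1 : p ≤ 1)
    {f : (Fin d → ℕ) → ℝ} {H : ℝ} (hf : ∀ k, 0 ≤ f k ∧ f k ≤ H) (j : Fin d) :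
    ∑' k, geomWeight p k * f (Pi.single j 1 + k) - ∑' k, geomWeight p k * f k ≤ p * H := by
  have hfH : ∀ k, |f k| ≤ H := fun k => (abs_of_nonneg (hf k).1).trans_le (hf k).2
  have hs₁ := summable_geomWeight_mul hp0 hp1 fun k => hfH (Pi.single j 1 + k)
  have hs₀ := summable_geomWeight_mul hp0 hp1 hfH
  have shift : (1 - p) * ∑' k, geomWeight p k * f (Pi.single j 1 + k) ≤
      ∑' k, geomWeight p k * f k := by
    rw [← tsum_mul_left]
    refine (hs₁.mul_left _).tsum_le_tsum_of_inj (Pi.single j 1 + ·) (add_right_injective _)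
      (fun k _ => mul_nonneg (geomWeight_nonneg hp0.le hp1 k) (hf k).1) (fun k => ?_) hs₀
    rw [geomWeight_single_add, mul_assoc]
  have bound : ∑' k, geomWeight p k * f (Pi.single j 1 + k) ≤ H := by
    calc _ ≤ ∑' k, geomWeight p k * H :=
          hs₁.tsum_le_tsum (fun k => mul_le_mul_of_nonneg_left (hf _).2
            (geomWeight_nonneg hp0.le hp1 k)) ((hasSum_geomWeight hp0 hp1).summable.mul_right H)
      _ = H := by rw [tsum_mul_right, (hasSum_geomWeight hp0 hp1).tsum_eq, one_mul]
  nlinarith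

end

theorem be_the_leader_s15 {A : Type*} (L : ℕ → A → ℝ) (x : ℕ → A) (hx : ∀ n a, L n a ≤ L n (x n))
    (a : A) (N : ℕ) :
    L N a ≤ L 0 (x 0) + ∑ t ∈ range N, (L (t + 1) (x (t + 1)) - L t (x (t + 1))) := by
  induction N generalizing a with
  | zero => simpa using hx 0 a
  | succ N ih =>
    rw [sum_range_succ]
    linarith [hx (N + 1) a, ih (x (N + 1))]

section
variable {ι : Type*} [DecidableEq ι] {T : ℕ}

def prefixCount (θ : Fin T → ι) (n : ℕ) (x : ι) : ℕ := #{s : Fin T | (s : ℕ) < n ∧ θ s = x}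

theorem prefixCount_zero (θ : Fin T → ι) : prefixCount θ 0 = 0 := by
  ext
  simp [prefixCount]

theorem prefixCount_succ (θ : Fin T → ι) (t : Fin T) :
    prefixCount θ (t + 1) = prefixCount θ t + Pi.single (θ t) 1 := by
  ext x
  simp only [prefixCount, Pi.add_apply, Pi.single_apply]
  split_ifs with hx
  · subst hx
    rw [← card_insert_of_notMem (s := {s : Fin T | (s : ℕ) < t ∧ θ s = θ t}) (a := t) (by simp)]
    congr 1
    ext s
    simp only [mem_filter, mem_univ, true_and, mem_insert]
    grind
  · rw [add_zero]
    congr 1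
    ext s
    simp only [mem_filter, mem_univ, true_and]
    grind

theorem sum_prefixCount_mul [Fintype ι] (θ : Fin T → ι) (v : ι → ℝ) :
    ∑ x, (prefixCount θ T x : ℝ) * v x = ∑ t, v (θ t) := by
  rw [← sum_fiberwise univ θ fun t => v (θ t)]
  refine sum_congr rfl fun x _ => ?_
  rw [sum_congr rfl fun s hs => by rw [(mem_filter.1 hs).2], sum_const, nsmul_eq_mul]
  simp [prefixCount]

theorem sum_add_single_mul [Fintype ι] (φ : ι → ℕ) (j : ι) (v : ι → ℝ) :
    ∑ x, (((φ + Pi.single j 1 : ι → ℕ) x : ℕ) : ℝ) * v x = ∑ x, (φ x : ℝ) * v x + v j := by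
  simp [add_mul, sum_add_distrib, Pi.single_apply]

theorem ftpl_regret_le_stability_add_perturbation [Fintype ι] {A : Type*} {H : ℝ}
    (u : A → ι → ℝ) (hu : ∀ a x, 0 ≤ u a x ∧ u a x ≤ H) (M : (ι → ℕ) → A)
    (hM : ∀ φ a, ∑ x, (φ x : ℝ) * u a x ≤ ∑ x, (φ x : ℝ) * u (M φ) x)
    (θ : Fin T → ι) (k : ι → ℕ) (a : A) :
    ∑ t : Fin T, (u a (θ t) - u (M (prefixCount θ t + k)) (θ t)) ≤
      ∑ t : Fin T, (u (M (prefixCount θ (t + 1) + k)) (θ t) - u (M (prefixCount θ t + k)) (θ t)) +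
        H * ∑ x, (k x : ℝ) := by
  set L : ℕ → A → ℝ := fun n b => ∑ x, ((prefixCount θ n + k) x : ℝ) * u b x
  have hstep : ∀ (t : Fin T) b, L (t + 1) b = L t b + u b (θ t) := by
    intro t b
    simp only [L]
    rw [prefixCount_succ, add_right_comm, sum_add_single_mul]
  have hbtl := be_the_leader_s15 L (fun n => M (prefixCount θ n + k)) (fun n b => hM _ b) a T
  rw [← Fin.sum_univ_eq_sum_range
    (fun t => L (t + 1) (M (prefixCount θ (t + 1) + k)) - L t (M (prefixCount θ (t + 1) + k)))]
    at hbtl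
  simp only [hstep, add_sub_cancel_left] at hbtl
  have hlast : L T a = ∑ t, u a (θ t) + ∑ x, (k x : ℝ) * u a x := by
    simp only [L, Pi.add_apply, Nat.cast_add, add_mul, sum_add_distrib, sum_prefixCount_mul]
  have hfirst : L 0 (M (prefixCount θ 0 + k)) ≤ H * ∑ x, (k x : ℝ) := by
    simp only [L, prefixCount_zero, zero_add, mul_sum]
    exact sum_le_sum fun x _ => by nlinarith [hu (M k) x, (k x).cast_nonneg (α := ℝ)]
  have hk : 0 ≤ ∑ x, (k x : ℝ) * u a x :=
    sum_nonneg fun x _ => mul_nonneg (Nat.cast_nonneg _) (hu a x).1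
  rw [sum_sub_distrib, sum_sub_distrib]
  linarith
end

theorem tsum_geomWeight_mul_ftpl_regret_le {d T : ℕ} {p H : ℝ} (hp0 : 0 < p) (hp1 : p ≤ 1)
    {A : Type*} (u : A → Fin d → ℝ) (hu : ∀ a x, 0 ≤ u a x ∧ u a x ≤ H) (M : (Fin d → ℕ) → A)
    (hM : ∀ φ a, ∑ x, (φ x : ℝ) * u a x ≤ ∑ x, (φ x : ℝ) * u (M φ) x)
    (θ : Fin T → Fin d) (a : A) :
    ∑' k, geomWeight p k * ∑ t : Fin T, (u a (θ t) - u (M (prefixCount θ t + k)) (θ t)) ≤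
      T * (p * H) + H * (d * ((1 - p) / p)) := by
  set w : (Fin d → ℕ) → ℝ := geomWeight p
  have hs : ∀ (b : (Fin d → ℕ) → A) x, Summable fun k => w k * u (b k) x := fun b x =>
    summable_geomWeight_mul hp0 hp1 fun k => (abs_of_nonneg (hu _ x).1).trans_le (hu _ x).2
  have hstab : ∀ t : Fin T, ∑' k, w k * u (M (prefixCount θ (t + 1) + k)) (θ t) -
      ∑' k, w k * u (M (prefixCount θ t + k)) (θ t) ≤ p * H := by
    intro t
    simpa only [← add_assoc, ← prefixCount_succ] using
      tsum_geomWeight_mul_single_add_sub_le hp0 hp1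
        (f := fun k => u (M (prefixCount θ t + k)) (θ t)) (fun k => hu _ _) (θ t)
  have hD : ∀ t : Fin T, Summable fun k => w k * u (M (prefixCount θ (t + 1) + k)) (θ t) -
      w k * u (M (prefixCount θ t + k)) (θ t) := fun t => (hs _ _).sub (hs _ _)
  have hK := (hasSum_geomWeight_mul_sum (d := d) hp0 hp1).summable.mul_left H
  calc ∑' k, w k * ∑ t : Fin T, (u a (θ t) - u (M (prefixCount θ t + k)) (θ t))
      ≤ ∑' k, (∑ t : Fin T, (w k * u (M (prefixCount θ (t + 1) + k)) (θ t) -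
          w k * u (M (prefixCount θ t + k)) (θ t)) + H * (w k * ∑ x, (k x : ℝ))) := by
        refine Summable.tsum_le_tsum (fun k => ?_) ?_ ?_
        · have := mul_le_mul_of_nonneg_left
            (ftpl_regret_le_stability_add_perturbation u hu M hM θ k a)
            (geomWeight_nonneg hp0.le hp1 k)
          simpa only [mul_add, mul_sum, mul_sub, mul_left_comm] using this
        · refine (summable_sum fun t (_ : t ∈ univ) => (hs (fun _ => a) (θ t)).sub
            (hs (fun k => M (prefixCount θ t + k)) (θ t))).congr fun k => ?_
          simp only [mul_sum, mul_sub]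
        · exact (summable_sum fun t _ => hD t).add hK
    _ = ∑ t : Fin T, (∑' k, w k * u (M (prefixCount θ (t + 1) + k)) (θ t) -
          ∑' k, w k * u (M (prefixCount θ t + k)) (θ t)) + H * (d * ((1 - p) / p)) := by
        rw [(summable_sum fun t _ => hD t).tsum_add hK, Summable.tsum_finsetSum fun t _ => hD t,
          tsum_mul_left, (hasSum_geomWeight_mul_sum hp0 hp1).tsum_eq]
        simp only [((hs _ _).tsum_sub (hs _ _))]
    _ ≤ ∑ t : Fin T, p * H + H * (d * ((1 - p) / p)) := by
        gcongr with t
        exact hstab t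
    _ = T * (p * H) + H * (d * ((1 - p) / p)) := by simp

/-- **Regret of follow-the-perturbed-leader with geometric sample perturbations.** With a
finite parameter space `Fin d`, an optimization oracle `M` on frequency vectors, perturbation
parameter `p = √(d/T)`, and the random perturbation `k` with i.i.d. geometric(p) coordinates
(outcome weight `p^d (1−p)^{∑ k θ'}`), the algorithm that draws `k` once and at round `t`
plays `M(φ t + k)`, where `φ t` is the frequency vector of the first `t` parameters, has
expected regret at most `2H√(dT)` against any fixed action and any oblivious sequence. -/
theorem geometric_ftpl_regret (d T : ℕ) (hd : 1 ≤ d) (hdT : d ≤ T) (H : ℝ) (hH : 0 ≤ H)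
    {A : Type*} (u : A → Fin d → ℝ) (hu : ∀ a θ, 0 ≤ u a θ ∧ u a θ ≤ H)
    (M : (Fin d → ℕ) → A)
    (hM : ∀ (φ : Fin d → ℕ) (a : A),
      ∑ θ' : Fin d, (φ θ' : ℝ) * u (M φ) θ' ≥ ∑ θ' : Fin d, (φ θ' : ℝ) * u a θ')
    (θ : Fin T → Fin d) :
    ∀ a : A,
      ∑' k : Fin d → ℕ,
          Real.sqrt ((d : ℝ) / T) ^ d * (1 - Real.sqrt ((d : ℝ) / T)) ^ (∑ θ' : Fin d, k θ') *
            (∑ t : Fin T, (u a (θ t) -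
              u (M ((fun θ' => (Finset.univ.filter
                  (fun s : Fin T => (s : ℕ) < (t : ℕ) ∧ θ s = θ')).card) + k)) (θ t)))
        ≤ 2 * H * Real.sqrt ((d : ℝ) * T) := by
  intro a
  have hd0 : (0 : ℝ) < d := by exact_mod_cast hd
  have hT0 : (0 : ℝ) < T := by exact_mod_cast hd.trans hdT
  set p := Real.sqrt ((d : ℝ) / T)
  have hp0 : 0 < p := Real.sqrt_pos.2 (div_pos hd0 hT0)
  have hp1 : p ≤ 1 := Real.sqrt_le_one.2 ((div_le_one hT0).2 (by exact_mod_cast hdT))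
  have hTp : T * p = Real.sqrt (d * T) := by
    rw [show (d : ℝ) * T = T ^ 2 * (d / T) by field_simp, Real.sqrt_mul (sq_nonneg _),
      Real.sqrt_sq hT0.le]
  have hdp : d / p = Real.sqrt (d * T) := by
    rw [div_eq_iff hp0.ne', ← Real.sqrt_mul (by positivity),
      show (d : ℝ) * T * (d / T) = d ^ 2 by field_simp, Real.sqrt_sq hd0.le]
  calc _ ≤ T * (p * H) + H * (d * ((1 - p) / p)) :=
        tsum_geomWeight_mul_ftpl_regret_le hp0 hp1 u hu M hM θ a
    _ ≤ T * (p * H) + H * (d / p) := by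
        rw [mul_div_assoc']
        gcongr
        exact mul_le_of_le_one_right hd0.le (by linarith)
    _ = 2 * H * Real.sqrt (d * T) := by
        rw [← mul_assoc, hTp, hdp]
        ring
end

section
/- Let m ≥ 1 and t ≥ 1 be natural numbers, ε > 0, D ≥ 0, H ≥ 0 reals. Let v : Finset (Fin m) → ℝ with 0 ≤ v(S) ≤ H for all S, and θ : ℕ → Fin m → ℝ with 0 ≤ θ(τ, j) ≤ D for all τ, j. For S : Finset (Fin m) and p : Fin m → ℝ write u(S, p) = v(S) − ∑_{j ∈ S} p(j). Let μ be the product over Fin m of the exponential distribution with rate ε on ℝ (density ε·e^{−εs} on [0,∞)). Let B, B' : (Fin m → ℝ) → Finset (Fin m) be measurable maps (preimages of each finset are measurable) such that for every x : Fin m → ℝ and every S : Finset (Fin m): u(B(x), x) + ∑_{τ=1}^{t} u(B(x), θ(τ)) ≥ u(S, x) + ∑_{τ=1}^{t} u(S, θ(τ)), and u(B'(x), x) + ∑_{τ=1}^{t−1} u(B'(x), θ(τ)) ≥ u(S, x) + ∑_{τ=1}^{t−1} u(S, θ(τ)). Then ∫ (u(B(x), θ(t)) − u(B'(x), θ(t)))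 dμ(x) ≤ (m·D + H)·(m/t + 3·ε·m·D). -/
/-!
Write `a = t / (t + 1)`. At the prices `a • x + b`, for a suitable offset `b` with
`|b j| ≤ a * D`, the cumulative utility of the first `t - 1` rounds is `a` times the cumulative
utility of the first `t` rounds at `x`. So `B x = B' (a • x + b)` unless two bundles tie, which
happens with probability zero, and the expected gain is `E[g (B' (a • x + b))] - E[g (B' x)]` for
a function `g` with values in `[0, m * D + H]`. It is therefore at most `m * D + H` times the total
variation distance between the laws of `a • x + b` and `x`. That distance is at most the sum of
the coordinatewise ones, and in one coordinate rescaling `Exp(ε)` by `a` costs `a⁻¹ - 1 = 1 / t`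
while shifting `Exp(ε / a)` by `b j` costs at most `ε * |b j| / a ≤ ε * D`.
-/

open MeasureTheory

/-- The buyer's utility from purchasing the bundle `S` at prices `p`. -/
noncomputable def buyerUtil (m : ℕ) (v : Finset (Fin m) → ℝ) (S : Finset (Fin m))
    (p : Fin m → ℝ) : ℝ :=
  v S - ∑ j ∈ S, p j

/-- The product over `Fin m` of exponential distributions with rate `ε`. -/
noncomputable def expPerturbation (m : ℕ) (ε : ℝ) : Measure (Fin m → ℝ) :=
  Measure.pi (fun _ : Fin m => ProbabilityTheory.expMeasure ε)

namespace MeasureTheory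

variable {α β : Type*} [MeasurableSpace α] [MeasurableSpace β]

lemma Measurable.integrable_of_nonneg_of_le {μ : Measure α} [IsFiniteMeasure μ] {ψ : α → ℝ}
    {C : ℝ} (hψ : Measurable ψ) (h0 : ∀ x, 0 ≤ ψ x) (hC : ∀ x, ψ x ≤ C) : Integrable ψ μ :=
  .of_bound hψ.aestronglyMeasurable C <| ae_of_all _ fun x => by
    rw [Real.norm_of_nonneg (h0 x)]; exact hC x

lemma integral_mul_le_integral_mul_add {μ : Measure α} {f g r φ : α → ℝ} {C : ℝ}
    (hf : Integrable f μ) (hg : Integrable g μ) (hr : Integrable r μ) (hφ : Measurable φ)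
    (hφ0 : ∀ x, 0 ≤ φ x) (hφC : ∀ x, φ x ≤ C) (hr0 : ∀ x, 0 ≤ r x) (hfg : ∀ x, f x - g x ≤ r x) :
    ∫ x, f x * φ x ∂μ ≤ ∫ x, g x * φ x ∂μ + C * ∫ x, r x ∂μ := by
  have hφ_bdd : ∀ᵐ x ∂μ, ‖φ x‖ ≤ C := ae_of_all _ fun x => by
    rw [Real.norm_of_nonneg (hφ0 x)]; exact hφC x
  rw [← integral_const_mul, ← integral_add (hg.mul_bdd hφ.aestronglyMeasurable hφ_bdd)
    (hr.const_mul C)]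
  refine integral_mono (hf.mul_bdd hφ.aestronglyMeasurable hφ_bdd)
    ((hg.mul_bdd hφ.aestronglyMeasurable hφ_bdd).add (hr.const_mul C)) fun x => ?_
  nlinarith [hfg x, hr0 x, hφ0 x, hφC x, mul_le_mul_of_nonneg_left (hφC x) (hr0 x)]

lemma Measure.pi_eq_zero_of_forall_update {ι : Type*} [Fintype ι] [DecidableEq ι]
    {X : ι → Type*} [∀ i, MeasurableSpace (X i)] (μ : ∀ i, Measure (X i))
    [∀ i, SigmaFinite (μ i)] (j : ι) {E : Set (∀ i, X i)} (hE : MeasurableSet E)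
    (hslice : ∀ x, μ j (Function.update x j ⁻¹' E) = 0) : Measure.pi μ E = 0 := by
  rw [← lintegral_indicator_one hE, ← lintegral_zero]
  refine lintegral_eq_of_lmarginal_eq {j} (measurable_one.indicator hE) measurable_const ?_
  ext x
  rw [lmarginal_singleton, lmarginal_singleton, lintegral_zero,
    ← hslice x, ← lintegral_indicator_one (measurable_update x hE)]
  rfl

/-- `f` changes the `μ`-integral of any measurable function with values in `[0, C]` by at most
`C * c`: for a probability measure, `μ.map f` is within total variation distance `c` of `μ`. -/
def DisplacesAtMost (μ : Measure α) (f : α → α) (c : ℝ) : Prop :=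
  ∀ (C : ℝ) (ψ : α → ℝ), Measurable ψ → (∀ x, 0 ≤ ψ x) → (∀ x, ψ x ≤ C) →
    ∫ x, ψ (f x) ∂μ ≤ (∫ x, ψ x ∂μ) + C * c

lemma DisplacesAtMost.of_measurePreserving {μ : Measure α} {ν : Measure β} {f : α → α}
    {g : β → β} {c : ℝ} (e : α ≃ᵐ β) (he : MeasurePreserving e μ ν) (hg : DisplacesAtMost ν g c)
    (hfg : ∀ x, e (f x) = g (e x)) : DisplacesAtMost μ f c := by
  intro C ψ hψ h0 hC
  have hf : ∀ x, ψ (f x) = (ψ ∘ e.symm) (g (e x)) := fun x => by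
    rw [Function.comp_apply, ← hfg, e.symm_apply_apply]
  calc ∫ x, ψ (f x) ∂μ = ∫ x, (ψ ∘ e.symm) (g (e x)) ∂μ := by simp_rw [hf]
    _ = ∫ y, (ψ ∘ e.symm) (g y) ∂ν := he.integral_comp' fun y => (ψ ∘ e.symm) (g y)
    _ ≤ (∫ y, (ψ ∘ e.symm) y ∂ν) + C * c :=
        hg C _ (hψ.comp e.symm.measurable) (fun _ => h0 _) (fun _ => hC _)
    _ = (∫ x, ψ x ∂μ) + C * c := by
        rw [← he.integral_comp' (ψ ∘ e.symm)]
        simp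

lemma DisplacesAtMost.prodMap {μ : Measure α} {ν : Measure β} [IsProbabilityMeasure μ]
    [IsProbabilityMeasure ν] {f : α → α} {g : β → β} {c d : ℝ} (hfm : Measurable f)
    (hgm : Measurable g) (hf : DisplacesAtMost μ f c) (hg : DisplacesAtMost ν g d) :
    DisplacesAtMost (μ.prod ν) (Prod.map f g) (c + d) := by
  intro C ψ hψ h0 hC
  have hint : ∀ φ : α × β → α × β, Measurable φ → Integrable (fun z => ψ (φ z)) (μ.prod ν) :=
    fun φ hφ => (hψ.comp hφ).integrable_of_nonneg_of_le (fun _ => h0 _) (fun _ => hC _)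
  have hmap : Integrable (fun z : α × β => ψ (f z.1, g z.2)) (μ.prod ν) :=
    hint _ (hfm.prodMap hgm)
  have hsnd : Integrable (fun z : α × β => ψ (z.1, g z.2)) (μ.prod ν) :=
    hint _ (measurable_fst.prodMk (hgm.comp measurable_snd))
  have hid : Integrable ψ (μ.prod ν) := hint _ measurable_id
  calc ∫ z, ψ (Prod.map f g z) ∂μ.prod ν
      = ∫ y, ∫ x, ψ (f x, g y) ∂μ ∂ν := integral_prod_symm _ hmap
    _ ≤ ∫ y, ((∫ x, ψ (x, g y) ∂μ) + C * c) ∂ν := by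
        refine integral_mono hmap.integral_prod_right
          (hsnd.integral_prod_right.add (integrable_const _)) fun y => ?_
        exact hf C _ (hψ.comp (measurable_id.prodMk measurable_const))
          (fun _ => h0 _) (fun _ => hC _)
    _ = (∫ x, ∫ y, ψ (x, g y) ∂ν ∂μ) + C * c := by
        rw [integral_add hsnd.integral_prod_right (integrable_const _), integral_const,
          probReal_univ, one_smul, ← integral_integral_swap (f := fun x y => ψ (x, g y)) hsnd]
    _ ≤ (∫ x, ((∫ y, ψ (x, y) ∂ν) + C * d) ∂μ) + C * c := by
        refine add_le_add (integral_mono hsnd.integral_prod_left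
          (hid.integral_prod_left.add (integrable_const _)) fun x => ?_) le_rfl
        exact hg C _ (hψ.comp (measurable_const.prodMk measurable_id))
          (fun _ => h0 _) (fun _ => hC _)
    _ = (∫ z, ψ z ∂μ.prod ν) + C * (c + d) := by
        rw [integral_add hid.integral_prod_left (integrable_const _), integral_const,
          probReal_univ, one_smul, ← integral_prod _ hid]
        ring

end MeasureTheory

namespace ProbabilityTheory

open Real Set

lemma exponentialPDFReal_eq_ite (r x : ℝ) :
    exponentialPDFReal r x = if 0 ≤ x then r * exp (-(r * x)) else 0 := by
  simp only [exponentialPDFReal, gammaPDFReal, rpow_one, Gamma_one, div_one, sub_self,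
    rpow_zero, mul_one]

lemma exponentialPDFReal_of_neg {r x : ℝ} (hx : x < 0) : exponentialPDFReal r x = 0 := by
  rw [exponentialPDFReal_eq_ite, if_neg hx.not_ge]

lemma exponentialPDFReal_of_nonneg {r x : ℝ} (hx : 0 ≤ x) :
    exponentialPDFReal r x = r * exp (-(r * x)) := by
  rw [exponentialPDFReal_eq_ite, if_pos hx]

lemma exponentialPDFReal_le {r : ℝ} (hr : 0 < r) (x : ℝ) : exponentialPDFReal r x ≤ r := by
  rcases lt_or_ge x 0 with hx | hx
  · rw [exponentialPDFReal_of_neg hx]; exact hr.le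
  · rw [exponentialPDFReal_of_nonneg hx]
    exact mul_le_of_le_one_right hr.le (exp_le_one_iff.mpr (by nlinarith))

lemma exponentialPDFReal_antitoneOn {r : ℝ} (hr : 0 < r) :
    AntitoneOn (exponentialPDFReal r) (Ici 0) := by
  intro x hx y hy hxy
  rw [exponentialPDFReal_of_nonneg hx, exponentialPDFReal_of_nonneg hy]
  gcongr

lemma exponentialPDFReal_div_mul {r a : ℝ} (ha : 0 < a) (x : ℝ) :
    exponentialPDFReal (r / a) (a * x) = a⁻¹ * exponentialPDFReal r x := by
  rcases lt_or_ge x 0 with hx | hx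
  · rw [exponentialPDFReal_of_neg hx, exponentialPDFReal_of_neg (by nlinarith), mul_zero]
  · rw [exponentialPDFReal_of_nonneg hx, exponentialPDFReal_of_nonneg (by positivity)]
    field_simp

lemma exponentialPDFReal_eq_exp_mul_sub {r b y : ℝ} (hb : 0 ≤ b) (hy : b ≤ y) :
    exponentialPDFReal r y = exp (-(r * b)) * exponentialPDFReal r (y - b) := by
  rw [exponentialPDFReal_of_nonneg (hb.trans hy), exponentialPDFReal_of_nonneg (by linarith),
    mul_left_comm, ← exp_add]
  ring_nf

lemma integrable_exponentialPDFReal {r : ℝ} (hr : 0 < r) : Integrable (exponentialPDFReal r) := by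
  refine ⟨(measurable_exponentialPDFReal r).aestronglyMeasurable, ?_⟩
  rw [hasFiniteIntegral_iff_ofReal (ae_of_all _ (exponentialPDFReal_nonneg hr))]
  exact (lintegral_exponentialPDF_eq_one hr).trans_lt ENNReal.one_lt_top

lemma integral_exponentialPDFReal {r : ℝ} (hr : 0 < r) : ∫ x, exponentialPDFReal r x = 1 := by
  have hlint : ∫⁻ x, ENNReal.ofReal (exponentialPDFReal r x) = 1 :=
    lintegral_exponentialPDF_eq_one hr
  rw [integral_eq_lintegral_of_nonneg_ae (ae_of_all _ (exponentialPDFReal_nonneg hr))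
    (measurable_exponentialPDFReal r).aestronglyMeasurable, hlint, ENNReal.toReal_one]

lemma integral_expMeasure {r : ℝ} (hr : 0 < r) (φ : ℝ → ℝ) :
    ∫ s, φ s ∂expMeasure r = ∫ s, exponentialPDFReal r s * φ s := by
  change ∫ s, φ s ∂(volume.withDensity fun x => ENNReal.ofReal (exponentialPDFReal r x)) = _
  rw [integral_withDensity_eq_integral_toReal_smul (by fun_prop)
    (ae_of_all _ fun _ => ENNReal.ofReal_lt_top)]
  simp [ENNReal.toReal_ofReal (exponentialPDFReal_nonneg hr _)]

lemma integral_exponentialPDFReal_sub_mul_le_of_nonneg {r b : ℝ} (hr : 0 < r) (hb : 0 ≤ b)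
    {φ : ℝ → ℝ} {C : ℝ} (hφ : Measurable φ) (hφ0 : ∀ y, 0 ≤ φ y) (hφC : ∀ y, φ y ≤ C) :
    ∫ y, exponentialPDFReal r (y - b) * φ y
      ≤ (∫ y, exponentialPDFReal r y * φ y) + C * (r * b) := by
  have hψ := integrable_exponentialPDFReal hr
  have hψb : Integrable fun y => exponentialPDFReal r (y - b) := hψ.comp_sub_right b
  have hexp : 1 - exp (-(r * b)) ≤ r * b := by linarith [add_one_le_exp (-(r * b))]
  -- on `[b, ∞)` the original density is `exp (-(r * b))` times the shifted one
  have hdom : ∀ y, exponentialPDFReal r (y - b) - exponentialPDFReal r y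
      ≤ (1 - exp (-(r * b))) * exponentialPDFReal r (y - b) := fun y => by
    rcases lt_or_ge y b with hy | hy
    · rw [exponentialPDFReal_of_neg (sub_neg.mpr hy)]
      linarith [exponentialPDFReal_nonneg hr y]
    · rw [exponentialPDFReal_eq_exp_mul_sub hb hy]
      linarith
  have hle := integral_mul_le_integral_mul_add hψb hψ (hψb.const_mul _) hφ hφ0 hφC
    (fun y => mul_nonneg (by simp only [sub_nonneg, exp_le_one_iff]; nlinarith)
      (exponentialPDFReal_nonneg hr _)) hdom
  rw [integral_const_mul, integral_sub_right_eq_self (exponentialPDFReal r) b,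
    integral_exponentialPDFReal hr, mul_one] at hle
  nlinarith [(hφ0 0).trans (hφC 0)]

lemma integral_exponentialPDFReal_sub_mul_le_of_neg {r b : ℝ} (hr : 0 < r) (hb : b < 0)
    {φ : ℝ → ℝ} {C : ℝ} (hφ : Measurable φ) (hφ0 : ∀ y, 0 ≤ φ y) (hφC : ∀ y, φ y ≤ C) :
    ∫ y, exponentialPDFReal r (y - b) * φ y
      ≤ (∫ y, exponentialPDFReal r y * φ y) + C * (r * -b) := by
  have hψ := integrable_exponentialPDFReal hr
  have hψb : Integrable fun y => exponentialPDFReal r (y - b) := hψ.comp_sub_right b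
  have hind : Integrable ((Ico b 0).indicator fun _ => r) := by
    rw [integrable_indicator_iff measurableSet_Ico]
    exact integrableOn_const (by simp)
  -- the shifted density exceeds the original one only on `[b, 0)`, and there by at most `r`
  have hdom : ∀ y, exponentialPDFReal r (y - b) - exponentialPDFReal r y
      ≤ (Ico b 0).indicator (fun _ => r) y := fun y => by
    rcases le_or_gt 0 y with hy | hy
    · rw [indicator_of_notMem (fun h => (not_le.mpr h.2) hy)]
      linarith [exponentialPDFReal_antitoneOn hr hy (show 0 ≤ y - b by linarith)
        (show y ≤ y - b by linarith)]
    · rw [exponentialPDFReal_of_neg hy]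
      rcases lt_or_ge y b with hyb | hyb
      · rw [exponentialPDFReal_of_neg (sub_neg.mpr hyb),
          indicator_of_notMem (fun h => (not_le.mpr hyb) h.1), sub_zero]
      · rw [indicator_of_mem (show y ∈ Ico b 0 from ⟨hyb, hy⟩)]
        linarith [exponentialPDFReal_le hr (y - b)]
  have hle := integral_mul_le_integral_mul_add hψb hψ hind hφ hφ0 hφC
    (fun y => indicator_nonneg (fun _ _ => hr.le) y) hdom
  rw [integral_indicator_const _ measurableSet_Ico, measureReal_def, Real.volume_Ico,
    ENNReal.toReal_ofReal (by linarith), smul_eq_mul] at hle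
  linarith

lemma integral_exponentialPDFReal_sub_mul_le {r : ℝ} (hr : 0 < r) (b : ℝ) {φ : ℝ → ℝ} {C : ℝ}
    (hφ : Measurable φ) (hφ0 : ∀ y, 0 ≤ φ y) (hφC : ∀ y, φ y ≤ C) :
    ∫ y, exponentialPDFReal r (y - b) * φ y
      ≤ (∫ y, exponentialPDFReal r y * φ y) + C * (r * |b|) := by
  rcases le_or_gt 0 b with hb | hb
  · rw [abs_of_nonneg hb]
    exact integral_exponentialPDFReal_sub_mul_le_of_nonneg hr hb hφ hφ0 hφC
  · rw [abs_of_neg hb]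
    exact integral_exponentialPDFReal_sub_mul_le_of_neg hr hb hφ hφ0 hφC

lemma integral_exponentialPDFReal_mul_le_of_le {r s : ℝ} (hr : 0 < r) (hrs : r ≤ s)
    {φ : ℝ → ℝ} {C : ℝ} (hφ : Measurable φ) (hφ0 : ∀ y, 0 ≤ φ y) (hφC : ∀ y, φ y ≤ C) :
    ∫ y, exponentialPDFReal s y * φ y ≤ (∫ y, exponentialPDFReal r y * φ y) + C * (s / r - 1) := by
  have hψ := integrable_exponentialPDFReal hr
  have hdom : ∀ y, exponentialPDFReal s y - exponentialPDFReal r y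
      ≤ (s / r - 1) * exponentialPDFReal r y := fun y => by
    rcases lt_or_ge y 0 with hy | hy
    · simp [exponentialPDFReal_of_neg hy]
    · rw [exponentialPDFReal_of_nonneg hy, exponentialPDFReal_of_nonneg hy]
      have hexp : exp (-(s * y)) ≤ exp (-(r * y)) := exp_le_exp.mpr (by nlinarith)
      have hrhs : (s / r - 1) * (r * exp (-(r * y)))
          = s * exp (-(r * y)) - r * exp (-(r * y)) := by
        field_simp
      nlinarith [mul_le_mul_of_nonneg_left hexp (hr.le.trans hrs)]
  have hle := integral_mul_le_integral_mul_add (integrable_exponentialPDFReal (hr.trans_le hrs))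
    hψ (hψ.const_mul _) hφ hφ0 hφC
    (fun y => mul_nonneg (by rw [sub_nonneg, one_le_div hr]; exact hrs)
      (exponentialPDFReal_nonneg hr y)) hdom
  rwa [integral_const_mul, integral_exponentialPDFReal hr, mul_one] at hle

lemma integral_expMeasure_comp_affine {r a : ℝ} (hr : 0 < r) (ha : 0 < a) (b : ℝ)
    (φ : ℝ → ℝ) :
    ∫ s, φ (a * s + b) ∂expMeasure r = ∫ y, exponentialPDFReal (r / a) (y - b) * φ y := by
  have hpt : ∀ s, exponentialPDFReal r s * φ (a * s + b)
      = a * exponentialPDFReal (r / a) (a * s + b - b) * φ (a * s + b) := fun s => by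
    rw [add_sub_cancel_right, exponentialPDFReal_div_mul ha, mul_inv_cancel_left₀ ha.ne']
  rw [integral_expMeasure hr, integral_congr_ae (ae_of_all _ hpt)]
  simp_rw [mul_assoc a]
  rw [integral_const_mul, Measure.integral_comp_mul_left
      (fun u => exponentialPDFReal (r / a) (u + b - b) * φ (u + b)) a,
    integral_add_right_eq_self (fun u => exponentialPDFReal (r / a) (u - b) * φ u) b,
    abs_of_pos (inv_pos.mpr ha), smul_eq_mul, mul_inv_cancel_left₀ ha.ne']

lemma displacesAtMost_expMeasure_affine {r a : ℝ} (hr : 0 < r) (ha0 : 0 < a) (ha1 : a ≤ 1)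
    (b : ℝ) : DisplacesAtMost (expMeasure r) (fun s => a * s + b) ((a⁻¹ - 1) + r * |b| / a) := by
  intro C φ hφ h0 hC
  have hra : r ≤ r / a := le_div_self hr.le ha0 ha1
  have hshift := integral_exponentialPDFReal_sub_mul_le (hr.trans_le hra) b hφ h0 hC
  have hscale := integral_exponentialPDFReal_mul_le_of_le hr hra hφ h0 hC
  rw [integral_expMeasure_comp_affine hr ha0, integral_expMeasure hr]
  rw [div_div_cancel_left' hr.ne'] at hscale
  calc ∫ y, exponentialPDFReal (r / a) (y - b) * φ y
      ≤ (∫ y, exponentialPDFReal r y * φ y) + C * (a⁻¹ - 1) + C * (r / a * |b|) := by linarith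
    _ = (∫ y, exponentialPDFReal r y * φ y) + C * ((a⁻¹ - 1) + r * |b| / a) := by ring

end ProbabilityTheory

open ProbabilityTheory

lemma isProbabilityMeasure_expPerturbation (m : ℕ) {ε : ℝ} (hε : 0 < ε) :
    IsProbabilityMeasure (expPerturbation m ε) := by
  have := isProbabilityMeasure_expMeasure hε
  unfold expPerturbation
  infer_instance

lemma displacesAtMost_expPerturbation_affine {ε a : ℝ} (hε : 0 < ε) (ha0 : 0 < a)
    (ha1 : a ≤ 1) :
    ∀ {n : ℕ} (b : Fin n → ℝ), DisplacesAtMost (expPerturbation n ε) (fun x j => a * x j + b j)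
      (∑ j, ((a⁻¹ - 1) + ε * |b j| / a))
  | 0, b => fun C ψ _ _ _ => by
    simp only [Finset.univ_eq_empty, Finset.sum_empty, mul_zero, add_zero]
    exact (integral_congr_ae (ae_of_all _ fun x => congrArg ψ (Subsingleton.elim _ x))).le
  | n + 1, b => by
    have := isProbabilityMeasure_expMeasure hε
    have := isProbabilityMeasure_expPerturbation n hε
    have he : MeasurePreserving (MeasurableEquiv.piFinSuccAbove (fun _ => ℝ) 0)
        (expPerturbation (n + 1) ε) ((expMeasure ε).prod (expPerturbation n ε)) :=
      measurePreserving_piFinSuccAbove (fun _ => expMeasure ε) 0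
    rw [Fin.sum_univ_succAbove _ 0]
    exact ((displacesAtMost_expMeasure_affine hε ha0 ha1 (b 0)).prodMap (by fun_prop)
      (by fun_prop) (displacesAtMost_expPerturbation_affine hε ha0 ha1 (b ∘ Fin.succAbove 0))
      ).of_measurePreserving _ he fun x => rfl

lemma buyerUtil_update_of_mem {m : ℕ} (v : Finset (Fin m) → ℝ) {S : Finset (Fin m)}
    {j : Fin m} (hj : j ∈ S) (x : Fin m → ℝ) (s : ℝ) :
    buyerUtil m v S (Function.update x j s) = v S - ∑ i ∈ S \ {j}, x i - s := by
  rw [buyerUtil, Finset.sum_update_of_mem hj]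
  ring

lemma buyerUtil_update_of_notMem {m : ℕ} (v : Finset (Fin m) → ℝ) {S : Finset (Fin m)}
    {j : Fin m} (hj : j ∉ S) (x : Fin m → ℝ) (s : ℝ) :
    buyerUtil m v S (Function.update x j s) = buyerUtil m v S x := by
  rw [buyerUtil, buyerUtil, Finset.sum_update_of_notMem hj]

lemma expPerturbation_setOf_buyerUtil_eq_eq_zero {m : ℕ} {ε : ℝ} (hε : 0 < ε)
    (v : Finset (Fin m) → ℝ) {S S' : Finset (Fin m)} {j : Fin m} (hjS : j ∈ S) (hjS' : j ∉ S') :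
    expPerturbation m ε {x | buyerUtil m v S x = buyerUtil m v S' x} = 0 := by
  have := isProbabilityMeasure_expMeasure hε
  have : NullSingletonClass (expMeasure ε) := by
    unfold expMeasure gammaMeasure; infer_instance
  refine Measure.pi_eq_zero_of_forall_update _ j
    (measurableSet_eq_fun (by unfold buyerUtil; fun_prop) (by unfold buyerUtil; fun_prop))
    fun x => Set.Subsingleton.measure_zero (fun s hs s' hs' => ?_) _
  simp only [Set.mem_preimage, Set.mem_ofPred_eq, buyerUtil_update_of_mem v hjS,
    buyerUtil_update_of_notMem v hjS'] at hs hs'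
  linarith

lemma ae_expPerturbation_buyerUtil_injective {m : ℕ} {ε : ℝ} (hε : 0 < ε)
    (v : Finset (Fin m) → ℝ) :
    ∀ᵐ x ∂expPerturbation m ε, ∀ S S', buyerUtil m v S x = buyerUtil m v S' x → S = S' := by
  simp_rw [ae_all_iff]
  intro S S'
  by_cases hSS' : S = S'
  · exact ae_of_all _ fun _ _ => hSS'
  obtain ⟨j, hj⟩ : ∃ j, ¬(j ∈ S ↔ j ∈ S') := by
    by_contra! h
    exact hSS' (Finset.ext h)
  refine ae_iff.2 (measure_mono_null (t := {x | buyerUtil m v S x = buyerUtil m v S' x})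
    (fun x hx => (Classical.not_imp.1 hx).1) ?_)
  by_cases hjS : j ∈ S
  · exact expPerturbation_setOf_buyerUtil_eq_eq_zero hε v hjS (fun h => hj (iff_of_true hjS h))
  · simp_rw [eq_comm (a := buyerUtil m v S _)]
    exact expPerturbation_setOf_buyerUtil_eq_eq_zero hε v (by tauto) hjS

lemma sum_buyerUtil {m : ℕ} (v : Finset (Fin m) → ℝ) (S : Finset (Fin m)) {ι : Type*}
    (T : Finset ι) (p : ι → Fin m → ℝ) :
    ∑ τ ∈ T, buyerUtil m v S (p τ) = T.card * v S - ∑ j ∈ S, ∑ τ ∈ T, p τ j := by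
  simp only [buyerUtil, Finset.sum_sub_distrib, Finset.sum_const, nsmul_eq_mul]
  rw [Finset.sum_comm]

lemma integral_buyerUtil_sub_le_of_ae_eq_comp {m : ℕ} {μ : Measure (Fin m → ℝ)}
    [IsProbabilityMeasure μ] {F : (Fin m → ℝ) → Fin m → ℝ} {c D H : ℝ} (hD : 0 ≤ D) (v : Finset (Fin m) → ℝ)
    (hv : ∀ S, 0 ≤ v S ∧ v S ≤ H) (p : Fin m → ℝ) (hp : ∀ j, 0 ≤ p j ∧ p j ≤ D)
    {B B' : (Fin m → ℝ) → Finset (Fin m)} (hBmeas : ∀ S, MeasurableSet (B ⁻¹' {S}))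
    (hB'meas : ∀ S, MeasurableSet (B' ⁻¹' {S})) (hF : DisplacesAtMost μ F c)
    (hBB' : ∀ᵐ x ∂μ, B x = B' (F x)) :
    ∫ x, (buyerUtil m v (B x) p - buyerUtil m v (B' x) p) ∂μ ≤ (m * D + H) * c := by
  set G : Finset (Fin m) → ℝ := fun S => buyerUtil m v S p + m * D
  have hpS : ∀ S : Finset (Fin m), 0 ≤ ∑ j ∈ S, p j ∧ ∑ j ∈ S, p j ≤ m * D := fun S =>
    ⟨Finset.sum_nonneg fun j _ => (hp j).1,
      (Finset.sum_le_card_nsmul S p D fun j _ => (hp j).2).trans <| by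
        rw [nsmul_eq_mul]; gcongr; exact_mod_cast S.card_le_univ.trans_eq (Fintype.card_fin m)⟩
  have hG0 : ∀ S, 0 ≤ G S := fun S => by simp only [G, buyerUtil]; linarith [hv S, hpS S]
  have hGC : ∀ S, G S ≤ m * D + H := fun S => by simp only [G, buyerUtil]; linarith [hv S, hpS S]
  have hGB' : Measurable fun x => G (B' x) :=
    (measurable_of_countable G).comp (measurable_to_countable' hB'meas)
  have hint : ∀ {B₀ : (Fin m → ℝ) → Finset (Fin m)}, (∀ S, MeasurableSet (B₀ ⁻¹' {S})) →
      Integrable (fun x => G (B₀ x)) μ := fun h =>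
    ((measurable_of_countable G).comp (measurable_to_countable' h)).integrable_of_nonneg_of_le
      (fun _ => hG0 _) (fun _ => hGC _)
  calc ∫ x, (buyerUtil m v (B x) p - buyerUtil m v (B' x) p) ∂μ
      = ∫ x, (G (B x) - G (B' x)) ∂μ := by simp only [G, add_sub_add_right_eq_sub]
    _ = (∫ x, G (B' (F x)) ∂μ) - ∫ x, G (B' x) ∂μ := by
        rw [integral_sub (hint hBmeas) (hint hB'meas)]
        exact congrArg (· - _) (integral_congr_ae (hBB'.mono fun x hx => congrArg G hx))
    _ ≤ (m * D + H) * c := by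
        linarith [hF _ _ hGB' (fun _ => hG0 _) (fun _ => hGC _)]

/-- At the prices `t / (t + 1) • x + priceShift m t θ`, the cumulative utility over the first
`t - 1` rounds is `t / (t + 1)` times the cumulative utility over the first `t` rounds at `x`
(`buyerUtil_priceShift`), so both leaders solve the same problem. -/
noncomputable def priceShift (m t : ℕ) (θ : ℕ → Fin m → ℝ) (j : Fin m) : ℝ :=
  t / (t + 1) * θ t j - (∑ τ ∈ Finset.Icc 1 (t - 1), θ τ j) / (t + 1)

lemma buyerUtil_priceShift {m t : ℕ} (ht : 1 ≤ t) (v : Finset (Fin m) → ℝ)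
    (θ : ℕ → Fin m → ℝ) (S : Finset (Fin m)) (x : Fin m → ℝ) :
    buyerUtil m v S (fun j => t / (t + 1) * x j + priceShift m t θ j)
        + ∑ τ ∈ Finset.Icc 1 (t - 1), buyerUtil m v S (θ τ)
      = t / (t + 1) * (buyerUtil m v S x + ∑ τ ∈ Finset.Icc 1 t, buyerUtil m v S (θ τ)) := by
  have hcard : ((Finset.Icc 1 (t - 1)).card : ℝ) = t - 1 := by
    rw [Nat.card_Icc, Nat.add_sub_cancel, Nat.cast_sub ht, Nat.cast_one]
  rw [← Finset.insert_Icc_sub_one_right_eq_Icc ht,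
    Finset.sum_insert (by simp; omega), sum_buyerUtil, hcard]
  simp only [buyerUtil, priceShift, Finset.sum_add_distrib, Finset.sum_sub_distrib,
    ← Finset.mul_sum, ← Finset.sum_div]
  field_simp
  ring

lemma abs_priceShift_le {m t : ℕ} {D : ℝ} {θ : ℕ → Fin m → ℝ}
    (hθ : ∀ τ j, 0 ≤ θ τ j ∧ θ τ j ≤ D) (j : Fin m) :
    |priceShift m t θ j| ≤ t / (t + 1) * D := by
  have hP := Finset.sum_le_card_nsmul (Finset.Icc 1 (t - 1)) (fun τ => θ τ j) D
    fun τ _ => (hθ τ j).2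
  have hP0 : 0 ≤ ∑ τ ∈ Finset.Icc 1 (t - 1), θ τ j := Finset.sum_nonneg fun τ _ => (hθ τ j).1
  have hcard : ((Finset.Icc 1 (t - 1)).card : ℝ) ≤ t := by
    exact_mod_cast (Nat.card_Icc 1 (t - 1)).trans_le (by omega)
  rw [nsmul_eq_mul] at hP
  have hD : 0 ≤ D := (hθ t j).1.trans (hθ t j).2
  have ht : (0 : ℝ) < t + 1 := by positivity
  rw [show priceShift m t θ j = (t * θ t j - ∑ τ ∈ Finset.Icc 1 (t - 1), θ τ j) / (t + 1) by
      rw [priceShift]; ring,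
    abs_div, abs_of_pos ht, div_mul_eq_mul_div]
  refine div_le_div_of_nonneg_right (abs_le.2 ⟨?_, ?_⟩) ht.le
  · nlinarith [(hθ t j).1, mul_le_mul_of_nonneg_right hcard hD]
  · nlinarith [(hθ t j).2]

lemma ae_leader_eq_prevLeader_comp_priceShift {m t : ℕ} (ht : 1 ≤ t) {ε : ℝ} (hε : 0 < ε)
    {v : Finset (Fin m) → ℝ} {θ : ℕ → Fin m → ℝ} {B B' : (Fin m → ℝ) → Finset (Fin m)}
    (hB : ∀ (x : Fin m → ℝ) (S : Finset (Fin m)),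
      buyerUtil m v (B x) x + ∑ τ ∈ Finset.Icc 1 t, buyerUtil m v (B x) (θ τ) ≥
        buyerUtil m v S x + ∑ τ ∈ Finset.Icc 1 t, buyerUtil m v S (θ τ))
    (hB' : ∀ (x : Fin m → ℝ) (S : Finset (Fin m)),
      buyerUtil m v (B' x) x + ∑ τ ∈ Finset.Icc 1 (t - 1), buyerUtil m v (B' x) (θ τ) ≥
        buyerUtil m v S x + ∑ τ ∈ Finset.Icc 1 (t - 1), buyerUtil m v S (θ τ)) :
    ∀ᵐ x ∂expPerturbation m ε, B x = B' (fun j => t / (t + 1) * x j + priceShift m t θ j) := by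
  filter_upwards [ae_expPerturbation_buyerUtil_injective hε
    fun S => v S + ∑ τ ∈ Finset.Icc 1 t, buyerUtil m v S (θ τ)] with x hx
  set y := fun j => t / (t + 1) * x j + priceShift m t θ j
  have hprev := hB' y (B x)
  rw [buyerUtil_priceShift ht, buyerUtil_priceShift ht] at hprev
  have hle := le_of_mul_le_mul_left hprev (by positivity)
  apply hx
  have := hB x (B' y)
  simp only [buyerUtil] at this hle ⊢
  linarith

lemma sum_displacement_priceShift_le {m t : ℕ} (ht : 1 ≤ t) {ε D : ℝ} (hε : 0 < ε)
    {θ : ℕ → Fin m → ℝ} (hθ : ∀ τ j, 0 ≤ θ τ j ∧ θ τ j ≤ D) :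
    ∑ j, (((t / (t + 1) : ℝ)⁻¹ - 1) + ε * |priceShift m t θ j| / (t / (t + 1)))
      ≤ m / t + ε * m * D := by
  have ht0 : (0 : ℝ) < t := by exact_mod_cast ht
  have hterm : ∀ j, ((t / (t + 1) : ℝ)⁻¹ - 1) + ε * |priceShift m t θ j| / (t / (t + 1))
      ≤ 1 / t + ε * D := fun j => by
    have hb : |priceShift m t θ j| / (t / (t + 1)) ≤ D := by
      rw [div_le_iff₀ (by positivity), mul_comm]; exact abs_priceShift_le hθ j
    rw [inv_div, add_div, div_self ht0.ne', add_sub_cancel_left, mul_div_assoc]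
    gcongr
  calc ∑ j, (((t / (t + 1) : ℝ)⁻¹ - 1) + ε * |priceShift m t θ j| / (t / (t + 1)))
      ≤ ∑ _j : Fin m, (1 / t + ε * D) := Finset.sum_le_sum fun j _ => hterm j
    _ = m / t + ε * m * D := by
        simp only [Finset.sum_const, Finset.card_univ, Fintype.card_fin, nsmul_eq_mul]
        ring

theorem exponential_perturbation_stability_general (m t : ℕ) (ht : 1 ≤ t)
    (ε D H : ℝ) (hε : 0 < ε) (hD : 0 ≤ D) (hH : 0 ≤ H)
    (v : Finset (Fin m) → ℝ) (hv : ∀ S, 0 ≤ v S ∧ v S ≤ H)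
    (θ : ℕ → Fin m → ℝ) (hθ : ∀ τ j, 0 ≤ θ τ j ∧ θ τ j ≤ D)
    (B B' : (Fin m → ℝ) → Finset (Fin m))
    (hBmeas : ∀ S : Finset (Fin m), MeasurableSet (B ⁻¹' {S}))
    (hB'meas : ∀ S : Finset (Fin m), MeasurableSet (B' ⁻¹' {S}))
    (hB : ∀ (x : Fin m → ℝ) (S : Finset (Fin m)),
      buyerUtil m v (B x) x + ∑ τ ∈ Finset.Icc 1 t, buyerUtil m v (B x) (θ τ) ≥
        buyerUtil m v S x + ∑ τ ∈ Finset.Icc 1 t, buyerUtil m v S (θ τ))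
    (hB' : ∀ (x : Fin m → ℝ) (S : Finset (Fin m)),
      buyerUtil m v (B' x) x + ∑ τ ∈ Finset.Icc 1 (t - 1), buyerUtil m v (B' x) (θ τ) ≥
        buyerUtil m v S x + ∑ τ ∈ Finset.Icc 1 (t - 1), buyerUtil m v S (θ τ)) :
    ∫ x, (buyerUtil m v (B x) (θ t) - buyerUtil m v (B' x) (θ t)) ∂(expPerturbation m ε)
      ≤ (m * D + H) * (m / t + 3 * ε * m * D) := by
  have := isProbabilityMeasure_expPerturbation m hε
  have hC : 0 ≤ m * D + H := by positivity
  have hshift := displacesAtMost_expPerturbation_affine hε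
    (a := t / (t + 1)) (by positivity) (div_le_one_of_le₀ (by linarith) (by positivity))
    (priceShift m t θ)
  calc ∫ x, (buyerUtil m v (B x) (θ t) - buyerUtil m v (B' x) (θ t)) ∂(expPerturbation m ε)
      ≤ (m * D + H) * (m / t + ε * m * D) :=
        (integral_buyerUtil_sub_le_of_ae_eq_comp hD v hv (θ t) (hθ t) hBmeas hB'meas hshift
          (ae_leader_eq_prevLeader_comp_priceShift ht hε hB hB')).trans
          (mul_le_mul_of_nonneg_left (sum_displacement_priceShift_le ht hε hθ) hC)
    _ ≤ (m * D + H) * (m / t + 3 * ε * m * D) := by gcongr; nlinarith [hε.le, hD]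

/-- **Stability of FTPL with a single exponential-sample perturbation for the online buyer's
problem.** If `B x` (resp. `B' x`) maximizes cumulative utility over the first `t` (resp.
`t − 1`) observed price vectors augmented by the random price vector `x` with i.i.d.
exponential(ε) coordinates, then the expected instantaneous gain of be-the-perturbed-leader
over follow-the-perturbed-leader at step `t` is at most `(mD + H)(m/t + 3εmD)`. -/
theorem exponential_perturbation_stability (m t : ℕ) (hm : 1 ≤ m) (ht : 1 ≤ t)
    (ε D H : ℝ) (hε : 0 < ε) (hD : 0 ≤ D) (hH : 0 ≤ H)
    (v : Finset (Fin m) → ℝ) (hv : ∀ S, 0 ≤ v S ∧ v S ≤ H)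
    (θ : ℕ → Fin m → ℝ) (hθ : ∀ τ j, 0 ≤ θ τ j ∧ θ τ j ≤ D)
    (B B' : (Fin m → ℝ) → Finset (Fin m))
    (hBmeas : ∀ S : Finset (Fin m), MeasurableSet (B ⁻¹' {S}))
    (hB'meas : ∀ S : Finset (Fin m), MeasurableSet (B' ⁻¹' {S}))
    (hB : ∀ (x : Fin m → ℝ) (S : Finset (Fin m)),
      buyerUtil m v (B x) x + ∑ τ ∈ Finset.Icc 1 t, buyerUtil m v (B x) (θ τ) ≥
        buyerUtil m v S x + ∑ τ ∈ Finset.Icc 1 t, buyerUtil m v S (θ τ))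
    (hB' : ∀ (x : Fin m → ℝ) (S : Finset (Fin m)),
      buyerUtil m v (B' x) x + ∑ τ ∈ Finset.Icc 1 (t - 1), buyerUtil m v (B' x) (θ τ) ≥
        buyerUtil m v S x + ∑ τ ∈ Finset.Icc 1 (t - 1), buyerUtil m v S (θ τ)) :
    ∫ x, (buyerUtil m v (B x) (θ t) - buyerUtil m v (B' x) (θ t)) ∂(expPerturbation m ε)
      ≤ (m * D + H) * (m / t + 3 * ε * m * D) :=
  exponential_perturbation_stability_general m t ht ε D H hε hD hH v hv θ hθ B B' hBmeas hB'meas hB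
    hB'
end

section
/- Let m ≥ 1 and t ≥ 1 be natural numbers, D ≥ 0 a real, and θ : ℕ → Fin m → ℝ with 0 ≤ θ(τ, j) ≤ D for all τ ∈ {1,…,t} and j. Define ψ : (Fin m → ℝ) → (Fin m → ℝ) by ψ(x)(j) = (t/(t+1))·x(j) − (1/(t+1))·∑_{τ=1}^{t−1} θ(τ, j) + (t/(t+1))·θ(t, j). Then for every x : Fin m → ℝ with x(j) ≥ 0 for all j: ∑_j |ψ(x)(j)| − ∑_j |x(j)| ≤ 2·m·D, and consequently for every ε ≥ 0, Real.exp(−ε·(∑_j |ψ(x)(j)| − ∑_j |x(j)|)) ≥ 1 − 2·ε·m·D. -/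
/-- The change-of-variables map in the stability analysis of FTPL with a single exponential
perturbation: it transforms a perturbation `x` appended to the first `t` price vectors into
an equivalent perturbation appended to the first `t − 1` price vectors. -/
noncomputable def psiMap (m t : ℕ) (θ : ℕ → Fin m → ℝ) (x : Fin m → ℝ) : Fin m → ℝ :=
  fun j => ((t : ℝ) / (t + 1)) * x j - (1 / ((t : ℝ) + 1)) * ∑ τ ∈ Finset.Icc 1 (t - 1), θ τ j
    + ((t : ℝ) / (t + 1)) * θ t j

/-!
Coordinatewise, `ψ(x)ⱼ = r xⱼ - pⱼ + r θₜⱼ` with `r = t/(t+1) ∈ [0, 1]` and `pⱼ` the sum of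
`t - 1` prices divided by `t + 1`, so both price terms lie in `[0, D]`. Hence `|ψ(x)ⱼ| ≤ xⱼ + 2D`
for `xⱼ ≥ 0`; summing over the `m` coordinates gives the ℓ₁ bound, and `exp(-u) ≥ 1 - u` turns
it into the density-ratio bound.
-/

lemma abs_mul_sub_add_mul_sub_abs_le {r x p q D : ℝ} (hr₀ : 0 ≤ r) (hr₁ : r ≤ 1) (hx : 0 ≤ x)
    (hp₀ : 0 ≤ p) (hpD : p ≤ D) (hq₀ : 0 ≤ q) (hqD : q ≤ D) :
    |r * x - p + r * q| - |x| ≤ 2 * D := by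
  have hrx : r * x ≤ x := mul_le_of_le_one_left hx hr₁
  have hrq : r * q ≤ D := (mul_le_of_le_one_left hq₀ hr₁).trans hqD
  rw [abs_of_nonneg hx, sub_le_iff_le_add, abs_le]
  constructor <;> nlinarith

lemma one_sub_mul_le_exp_neg_mul_of_le {s C ε : ℝ} (hs : s ≤ C) (hε : 0 ≤ ε) :
    1 - ε * C ≤ Real.exp (-ε * s) := by
  have hεs : ε * s ≤ ε * C := mul_le_mul_of_nonneg_left hs hε
  linarith [Real.add_one_le_exp (-ε * s)]

lemma one_div_succ_mul_sum_Icc_mem_Icc {t : ℕ} {f : ℕ → ℝ} {D : ℝ} (hD : 0 ≤ D)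
    (hf : ∀ τ ∈ Finset.Icc 1 (t - 1), f τ ∈ Set.Icc 0 D) :
    1 / ((t : ℝ) + 1) * ∑ τ ∈ Finset.Icc 1 (t - 1), f τ ∈ Set.Icc 0 D := by
  refine ⟨mul_nonneg (by positivity) (Finset.sum_nonneg fun τ hτ => (hf τ hτ).1), ?_⟩
  rw [one_div_mul_eq_div, div_le_iff₀ (by positivity)]
  calc ∑ τ ∈ Finset.Icc 1 (t - 1), f τ
      ≤ (Finset.Icc 1 (t - 1)).card • D := Finset.sum_le_card_nsmul _ _ _ fun τ hτ => (hf τ hτ).2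
    _ = ((t - 1 : ℕ) : ℝ) * D := by simp
    _ ≤ ((t : ℝ) + 1) * D := by gcongr; exact_mod_cast (Nat.sub_le t 1).trans (Nat.le_succ t)
    _ = D * ((t : ℝ) + 1) := mul_comm _ _

lemma abs_psiMap_apply_sub_abs_le {m t : ℕ} {θ : ℕ → Fin m → ℝ} {D : ℝ} (ht : 1 ≤ t)
    (hθ : ∀ τ, 1 ≤ τ → τ ≤ t → ∀ j, 0 ≤ θ τ j ∧ θ τ j ≤ D) {x : Fin m → ℝ} {j : Fin m}
    (hx : 0 ≤ x j) : |psiMap m t θ x j| - |x j| ≤ 2 * D := by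
  obtain ⟨hθ₀, hθD⟩ := hθ t ht le_rfl j
  have hr₁ : (t : ℝ) / (t + 1) ≤ 1 := by rw [div_le_one (by positivity)]; linarith
  have hearlier : ∀ τ ∈ Finset.Icc 1 (t - 1), θ τ j ∈ Set.Icc 0 D := fun τ hτ => by
    obtain ⟨h₁, h₂⟩ := Finset.mem_Icc.mp hτ
    exact hθ τ h₁ (h₂.trans (Nat.sub_le t 1)) j
  obtain ⟨hp₀, hpD⟩ := one_div_succ_mul_sum_Icc_mem_Icc (hθ₀.trans hθD) hearlier
  exact abs_mul_sub_add_mul_sub_abs_le (by positivity) hr₁ hx hp₀ hpD hθ₀ hθD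

theorem psiMap_l1_bound_general (m t : ℕ) (ht : 1 ≤ t) (D : ℝ)
    (θ : ℕ → Fin m → ℝ) (hθ : ∀ τ, 1 ≤ τ → τ ≤ t → ∀ j, 0 ≤ θ τ j ∧ θ τ j ≤ D) :
    ∀ x : Fin m → ℝ, (∀ j, 0 ≤ x j) →
      (∑ j : Fin m, |psiMap m t θ x j|) - ∑ j : Fin m, |x j| ≤ 2 * m * D ∧
      ∀ ε : ℝ, 0 ≤ ε →
        Real.exp (-ε * ((∑ j : Fin m, |psiMap m t θ x j|) - ∑ j : Fin m, |x j|))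
          ≥ 1 - 2 * ε * m * D := by
  intro x hx
  have hl1 : (∑ j : Fin m, |psiMap m t θ x j|) - ∑ j : Fin m, |x j| ≤ 2 * m * D := by
    rw [← Finset.sum_sub_distrib]
    calc ∑ j : Fin m, (|psiMap m t θ x j| - |x j|)
        ≤ ∑ _j : Fin m, 2 * D :=
          Finset.sum_le_sum fun j _ => abs_psiMap_apply_sub_abs_le ht hθ (hx j)
      _ = 2 * m * D := by
        simp only [Finset.sum_const, Finset.card_univ, Fintype.card_fin, nsmul_eq_mul]; ring
  refine ⟨hl1, fun ε hε => ?_⟩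
  have := one_sub_mul_le_exp_neg_mul_of_le hl1 hε
  linarith

/-- **ℓ₁-norm bound on the change of variables, and the induced density-ratio bound.** If all
prices lie in `[0, D]` then `‖ψ(x)‖₁ − ‖x‖₁ ≤ 2mD` for every nonnegative `x`, and consequently
the ratio of the product exponential(ε) densities at `ψ(x)` and at `x` is at least
`1 − 2εmD`. -/
theorem psiMap_l1_bound (m t : ℕ) (hm : 1 ≤ m) (ht : 1 ≤ t) (D : ℝ) (hD : 0 ≤ D)
    (θ : ℕ → Fin m → ℝ) (hθ : ∀ τ, 1 ≤ τ → τ ≤ t → ∀ j, 0 ≤ θ τ j ∧ θ τ j ≤ D) :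
    ∀ x : Fin m → ℝ, (∀ j, 0 ≤ x j) →
      (∑ j : Fin m, |psiMap m t θ x j|) - ∑ j : Fin m, |x j| ≤ 2 * m * D ∧
      ∀ ε : ℝ, 0 ≤ ε →
        Real.exp (-ε * ((∑ j : Fin m, |psiMap m t θ x j|) - ∑ j : Fin m, |x j|))
          ≥ 1 - 2 * ε * m * D :=
  psiMap_l1_bound_general m t ht D θ hθ
end

section
/- Let k ≥ 1 and r > 0 be reals, and let v, APX, OPT, OPTc be reals satisfying: OPT = v − OPTc·(r/k), |APX − OPT| ≤ 1/(2k), and v − APX ≥ 1. Then the quantity Q = ((2k−1)/(2r))·(v − APX) satisfies Q ≤ OPTc ≤ 3·Q. -/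
/-!
Writing `x = v − APX` and `e = APX − OPT`, the hypothesis on `OPT` says `2r·OPTc = 2k(x + e)`,
while `Q = (2k − 1)x / (2r)`. The additive error `2k·e` lies in `[−1, 1]`, and since `x ≥ 1` and
`k ≥ 1` it is absorbed multiplicatively: `(2k − 1)x ≤ 2kx − 1` and `2kx + 1 ≤ 3(2k − 1)x`.
-/

lemma abs_two_mul_mul_le_one {k e : ℝ} (hk : 0 < k) (he : |e| ≤ 1 / (2 * k)) :
    |2 * k * e| ≤ 1 := by
  rw [abs_mul, abs_of_pos (by positivity : 0 < 2 * k), mul_comm]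
  rwa [le_div_iff₀ (by positivity)] at he

lemma two_mul_sub_one_mul_le {k x e : ℝ} (hk : 0 < k) (hx : 1 ≤ x) (he : |e| ≤ 1 / (2 * k)) :
    (2 * k - 1) * x ≤ 2 * k * (x + e) := by
  have := (abs_le.1 (abs_two_mul_mul_le_one hk he)).1
  linarith

lemma le_three_mul_two_mul_sub_one_mul {k x e : ℝ} (hk : 1 ≤ k) (hx : 1 ≤ x)
    (he : |e| ≤ 1 / (2 * k)) : 2 * k * (x + e) ≤ 3 * ((2 * k - 1) * x) := by
  have := (abs_le.1 (abs_two_mul_mul_le_one (by positivity) he)).2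
  linarith [mul_nonneg (sub_nonneg.2 hk) (sub_nonneg.2 hx)]

/-- **Arithmetic core of the inapproximability argument for optimal bidding.** If
`OPT = v − OPTc·(r/k)`, `APX` is within `1/(2k)` of `OPT`, and `v − APX ≥ 1`, then
`Q = ((2k−1)/(2r))·(v − APX)` satisfies `Q ≤ OPTc ≤ 3Q`, i.e. it is a multiplicative
3-approximation of the set-cover optimum `OPTc`. -/
theorem setcover_three_approx (k r v APX OPT OPTc : ℝ) (hk : 1 ≤ k) (hr : 0 < r)
    (hOPT : OPT = v - OPTc * (r / k))
    (hAPX : |APX - OPT| ≤ 1 / (2 * k))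
    (hgap : 1 ≤ v - APX) :
    ((2 * k - 1) / (2 * r)) * (v - APX) ≤ OPTc ∧
      OPTc ≤ 3 * (((2 * k - 1) / (2 * r)) * (v - APX)) := by
  have hk₀ : 0 < k := by positivity
  have hcover : OPTc = 2 * k * ((v - APX) + (APX - OPT)) / (2 * r) := by
    subst hOPT
    field_simp
    ring
  rw [hcover, div_mul_eq_mul_div, ← mul_div_assoc]
  exact ⟨div_le_div_of_nonneg_right (two_mul_sub_one_mul_le hk₀ hgap hAPX) (by positivity),
    div_le_div_of_nonneg_right (le_three_mul_two_mul_sub_one_mul hk hgap hAPX) (by positivity)⟩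
end
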